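/- arXiv:2212.05553 — 3 statements merged into one kernel-verified Lean document; each statement's English description precedes it below -/
import Mathlib

section
/- Let T be an infinite periodic tree (the directed cover of a finite directed graph G based at x₀). If some strongly connected component of G contains a vertex with at least two outgoing edges staying within that component, and that component is reachable from x₀, then the branching number of T is strictly greater than 1. -/
open Filter ENNReal

namespace TreeNotions

variable {α : Type}

/-- Vertices (equivalently, edges indexed by their upper endpoint) at level `n`. -/
def level (T : Set (List α)) (n : ℕ) : Set (List α) := {v ∈ T | v.length = n}

/-- The ball of radius `n` around the root. -/
def ball (T : Set (List α)) (n : ℕ) : Set (List α) := {v ∈ T | v.length ≤ n}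

/-- An infinite simple path from the root. -/
def IsRay (T : Set (List α)) (r : ℕ → List α) : Prop :=
  r 0 = [] ∧ ∀ n, r n ∈ T ∧ ∃ a, r (n + 1) = r n ++ [a]

/-- A cutset separating the root from infinity: a set of edges (identified with their
upper endpoints) meeting every infinite simple path from the root. -/
def IsCutset (T : Set (List α)) (π : Set (List α)) : Prop :=
  (∀ v ∈ π, v ∈ T ∧ v ≠ []) ∧ ∀ r, IsRay T r → ∃ n, r n ∈ π

/-- An infinite, locally finite, rooted (prefix-closed) tree of words. -/
def IsTree (T : Set (List α)) : Prop :=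
  [] ∈ T ∧ (∀ v ∈ T, v.dropLast ∈ T) ∧ (∀ v ∈ T, {a : α | v ++ [a] ∈ T}.Finite) ∧ T.Infinite

/-- The branching number. -/
noncomputable def br (T : Set (List α)) : ℝ≥0∞ :=
  sSup {lam : ℝ≥0∞ | 0 < lam ∧
    0 < ⨅ (π) (_ : IsCutset T π), ∑' e : π, lam⁻¹ ^ (e : List α).length}

/-- The lower exponential growth rate. -/
noncomputable def gr (T : Set (List α)) : ℝ≥0∞ :=
  Filter.liminf (fun n => (Nat.card (level T n) : ℝ≥0∞) ^ ((n : ℝ)⁻¹)) atTop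

/-- The intermediate branching number (with `sSup ∅ = 0`). -/
noncomputable def Ibr (T : Set (List α)) : ℝ :=
  sSup {lam : ℝ | 0 < lam ∧
    0 < ⨅ (π) (_ : IsCutset T π),
      ∑' e : π, ENNReal.ofReal (Real.exp (-((e : List α).length : ℝ) ^ lam))}

/-- The intermediate growth rate (with `sSup ∅ = 0`). -/
noncomputable def Igr (T : Set (List α)) : ℝ :=
  sSup {lam : ℝ | 0 < lam ∧
    0 < Filter.liminf
      (fun n => ∑' _e : level T n, ENNReal.ofReal (Real.exp (-(n : ℝ) ^ lam))) atTop}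

/-- The branching-ruin number (with `sSup ∅ = 0`). -/
noncomputable def brr (T : Set (List α)) : ℝ :=
  sSup {lam : ℝ | 0 < lam ∧
    0 < ⨅ (π) (_ : IsCutset T π),
      ∑' e : π, ENNReal.ofReal (((e : List α).length : ℝ) ^ (-lam))}

/-- The polynomial growth rate (with `sSup ∅ = 0`). -/
noncomputable def grr (T : Set (List α)) : ℝ :=
  sSup {lam : ℝ | 0 < lam ∧
    0 < Filter.liminf
      (fun n => ∑' _e : level T n, ENNReal.ofReal ((n : ℝ) ^ (-lam))) atTop}

/-- The descendant subtree of a vertex `w`. -/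
def desc (T : Set (List α)) (w : List α) : Set (List α) := {v ∈ T | w <+: v}

/-- Adjacency in a tree of words. -/
def Adj (u v : List α) : Prop := (∃ a, v = u ++ [a]) ∨ ∃ a, u = v ++ [a]

/-- A tree of words is subperiodic if for some `N ≥ 0`, every vertex `x` admits an
adjacency-preserving injection from `T^x` to `T^{f(x)}` with `|f(x)| ≤ N`. -/
def IsSubperiodic (T : Set (List α)) : Prop :=
  ∃ N : ℕ, ∀ w ∈ T, ∃ f : List α → List α,
    f w ∈ T ∧ (f w).length ≤ N ∧ Set.InjOn f (desc T w) ∧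
    Set.MapsTo f (desc T w) (desc T (f w)) ∧
    ∀ u ∈ desc T w, ∀ v ∈ desc T w, Adj u v → Adj (f u) (f v)

/-- Number of children of the `i`-th vertex (from the left) at level `n` of the 1-3 tree. -/
def childCount (n i : ℕ) : ℕ := if n = 0 then 2 else if i < 2 ^ (n - 1) then 1 else 3

/-- The ordered list of (labelled) vertices at level `n` of the 1-3 tree. -/
def T13Level : ℕ → List (List ℕ)
  | 0 => [[]]
  | n + 1 => (T13Level n).zipIdx.flatMap fun p => (List.range (childCount n p.2)).map fun j => p.1 ++ [j]

/-- The 1-3 tree, as a set of labelled words. -/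
def T13 : Set (List ℕ) := {w | ∃ n, w ∈ T13Level n}

/-- Replace the letter at level `k + 1` by that letter followed by `k` zeros:
the edge at level `k + 1` is subdivided into a path of `k + 1` edges. -/
def expandFrom : ℕ → List ℕ → List ℕ
  | _, [] => []
  | k, a :: rest => (a :: List.replicate k 0) ++ expandFrom (k + 1) rest

/-- The subdivided 1-3 tree `T₀`: each level-`n` edge of the 1-3 tree becomes a path of
`n` edges. -/
def T0 : Set (List ℕ) := {u | ∃ w ∈ T13, u <+: expandFrom 0 w}

/-- The prefix of length `n` of a sequence. -/
def pref (x : ℕ → ℕ) (n : ℕ) : List ℕ := (List.range n).map x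

/-- The set of sequences coded by `T₀` (its rays). -/
def E0 : Set (ℕ → ℕ) := {x | ∀ n, pref x n ∈ T0}

/-- The left shift map. -/
def shift (x : ℕ → ℕ) : ℕ → ℕ := fun n => x (n + 1)

/-- The shift closure of `E₀`. -/
def Etilde : Set (ℕ → ℕ) := ⋃ j : ℕ, shift^[j] '' E0

/-- The prefix tree `Φ(E)` of a set of sequences. -/
def treeOf (E : Set (ℕ → ℕ)) : Set (List ℕ) := {w | ∃ x ∈ E, ∃ n, w = pref x n}

/-- The tree `T̃ = Φ(Ẽ)`. -/
def Ttilde : Set (List ℕ) := treeOf Etilde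

end TreeNotions

namespace TreeNotions

section Aux
variable {V : Type} {G : V → V → Prop}

def lastOf (a : V) (l : List V) : V := (a :: l).getLast (List.cons_ne_nil a l)

lemma lastOf_nil (a : V) : lastOf a [] = a := rfl

lemma lastOf_cons (a b : V) (l : List V) : lastOf a (b :: l) = lastOf b l := by
  simp [lastOf, List.getLast_cons]

lemma lastOf_append (a : V) (l l' : List V) :
    lastOf a (l ++ l') = lastOf (lastOf a l) l' := by
  induction l generalizing a with
  | nil => simp [lastOf_nil]
  | cons b l ih => rw [List.cons_append, lastOf_cons, lastOf_cons, ih]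

lemma chain_append' : ∀ {a : V} {l : List V}, List.Chain G a l →
    ∀ {l' : List V}, List.Chain G (lastOf a l) l' → List.Chain G a (l ++ l') := by
  intro a l h
  induction l generalizing a with
  | nil => intro l' h'; simpa [lastOf_nil] using h'
  | cons b l ih =>
    intro l' h'
    rw [lastOf_cons] at h'
    have hc := List.chain_cons.1 h
    exact List.chain_cons.2 ⟨hc.1, ih hc.2 h'⟩

lemma chain_prefix : ∀ (l₁ : List V) {a : V} {l₂ : List V},
    List.Chain G a (l₁ ++ l₂) → List.Chain G a l₁ := by
  intro l₁
  induction l₁ with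
  | nil => intro a l₂ _; exact List.Chain.nil
  | cons b l ih =>
    intro a l₂ h
    rw [List.cons_append] at h
    replace h := List.chain_cons.1 h
    exact List.chain_cons.2 ⟨h.1, ih h.2⟩

lemma chain_of_prefix {a : V} {l l' : List V} (h : l' <+: l) (hc : List.Chain G a l) :
    List.Chain G a l' := by
  obtain ⟨r, rfl⟩ := h
  exact chain_prefix l' hc

lemma exists_path {a b : V} (h : Relation.ReflTransGen G a b) :
    ∃ l, List.Chain G a l ∧ lastOf a l = b := by
  induction h with
  | refl => exact ⟨[], List.Chain.nil, rfl⟩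
  | @tail b' c _ hbc ih =>
    obtain ⟨l, hl, hlast⟩ := ih
    refine ⟨l ++ [c], chain_append' hl ?_, ?_⟩
    · rw [hlast]; exact List.chain_cons.2 ⟨hbc, List.Chain.nil⟩
    · rw [lastOf_append, hlast, lastOf_cons, lastOf_nil]

lemma exists_diff {β : Type*} : ∀ {t t' : List β}, t.length = t'.length → t ≠ t' →
    ∃ c b b' r r', b ≠ b' ∧ t = c ++ b :: r ∧ t' = c ++ b' :: r' := by
  intro t
  induction t with
  | nil =>
    intro t' hl hne
    cases t' with
    | nil => exact absurd rfl hne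
    | cons a t'' => simp at hl
  | cons a t ih =>
    intro t' hl hne
    cases t' with
    | nil => simp at hl
    | cons a' t'' =>
      by_cases hab : a = a'
      · subst hab
        have ht : t ≠ t'' := fun h => hne (by rw [h])
        obtain ⟨c, b, b', r, r', hbb, h1, h2⟩ := ih (by simpa using hl) ht
        exact ⟨a :: c, b, b', r, r', hbb, by simp [h1], by simp [h2]⟩
      · exact ⟨[], a, a', t, t'', hab, by simp, by simp⟩

lemma sep {c : List V} {a a' : V} (hne : a ≠ a') {t₁ t₂ e : List V}
    (h1 : e <+: c ++ a :: t₁) (h2 : e <+: c ++ a' :: t₂) : e.length ≤ c.length := by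
  by_contra hlen
  push_neg at hlen
  have hca : c ++ [a] <+: c ++ a :: t₁ := ⟨t₁, by simp⟩
  have hca' : c ++ [a'] <+: c ++ a' :: t₂ := ⟨t₂, by simp⟩
  have key : c ++ [a] <+: c ++ a' :: t₂ := by
    rcases List.prefix_or_prefix_of_prefix h1 hca with h | h
    · have : e = c ++ [a] := h.eq_of_length (by
        have := h.length_le
        simp only [List.length_append, List.length_singleton] at this ⊢
        omega)
      rw [← this]; exact h2
    · exact h.trans h2
  have he1 := List.prefix_of_prefix_length_le key hca' (by simp)
  have : c ++ [a] = c ++ [a'] := he1.eq_of_length (by simp)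
  simp at this
  exact hne this

end Aux

noncomputable def gfun (Q : Set (List Bool)) (u : List Bool) : ℝ≥0∞ :=
  ∑' t : {t : List Bool | t ∈ Q ∧ u <+: t}, (2 : ℝ≥0∞)⁻¹ ^ ((t : List Bool).length - u.length)

lemma gfun_ge_one {Q : Set (List Bool)} {u : List Bool} (hu : u ∈ Q) : 1 ≤ gfun Q u := by
  have h := ENNReal.le_tsum (f := fun t : {t : List Bool | t ∈ Q ∧ u <+: t} =>
    (2 : ℝ≥0∞)⁻¹ ^ ((t : List Bool).length - u.length)) ⟨u, hu, List.prefix_refl u⟩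
  simpa [gfun] using h

lemma gfun_rec {Q : Set (List Bool)} {u : List Bool} (hu : u ∉ Q) :
    gfun Q u = 2⁻¹ * (gfun Q (u ++ [false]) + gfun Q (u ++ [true])) := by
  have hsub : ∀ b : Bool, ∀ t ∈ {t : List Bool | t ∈ Q ∧ u ++ [b] <+: t},
      t.length - u.length = (t.length - (u ++ [b]).length) + 1 := by
    rintro b t ⟨-, ht⟩
    have := ht.length_le
    simp only [List.length_append, List.length_singleton] at this ⊢
    omega
  have hset : {t : List Bool | t ∈ Q ∧ u <+: t} =
      {t : List Bool | t ∈ Q ∧ u ++ [false] <+: t} ∪ {t : List Bool | t ∈ Q ∧ u ++ [true] <+: t} := by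
    ext t
    simp only [Set.mem_setOf_eq, Set.mem_union]
    constructor
    · rintro ⟨htQ, r, rfl⟩
      cases r with
      | nil => exact absurd htQ (by simpa using hu)
      | cons a r' =>
        cases a
        · exact Or.inl ⟨htQ, r', by simp⟩
        · exact Or.inr ⟨htQ, r', by simp⟩
    · rintro (⟨htQ, h⟩ | ⟨htQ, h⟩) <;>
        exact ⟨htQ, ((u.prefix_append _).trans h)⟩
  have hdisj : Disjoint {t : List Bool | t ∈ Q ∧ u ++ [false] <+: t}
      {t : List Bool | t ∈ Q ∧ u ++ [true] <+: t} := by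
    rw [Set.disjoint_left]
    rintro t ⟨-, h1⟩ ⟨-, h2⟩
    have := (List.prefix_of_prefix_length_le h1 h2 (by simp)).eq_of_length (by simp)
    simp at this
  have hbranch : ∀ b : Bool, (∑' t : {t : List Bool | t ∈ Q ∧ u ++ [b] <+: t},
      (2 : ℝ≥0∞)⁻¹ ^ ((t : List Bool).length - u.length)) = 2⁻¹ * gfun Q (u ++ [b]) := by
    intro b
    rw [gfun, ← ENNReal.tsum_mul_left]
    refine tsum_congr fun t => ?_
    rw [hsub b t t.2, pow_succ, mul_comm]
  rw [gfun, hset, ENNReal.summable.tsum_union_disjoint (f := fun t : List Bool =>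
      (2 : ℝ≥0∞)⁻¹ ^ (t.length - u.length)) hdisj ENNReal.summable,
    hbranch false, hbranch true, mul_add]

lemma binary_cutset_sum {Q : Set (List Bool)}
    (hQ : ∀ x : ℕ → Bool, ∃ m, (List.range m).map x ∈ Q) :
    1 ≤ ∑' t : Q, (2 : ℝ≥0∞)⁻¹ ^ (t : List Bool).length := by
  by_contra hcon
  push_neg at hcon
  have h0 : gfun Q [] < 1 := by
    have hset : {t : List Bool | t ∈ Q ∧ [] <+: t} = Q := by
      ext t; simp [List.nil_prefix]
    calc gfun Q [] = ∑' t : Q, (2 : ℝ≥0∞)⁻¹ ^ (t : List Bool).length := by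
          rw [gfun, hset]; simp
      _ < 1 := hcon
  have step : ∀ u : List Bool, u ∉ Q → gfun Q u < 1 →
      ∃ b, (u ++ [b]) ∉ Q ∧ gfun Q (u ++ [b]) < 1 := by
    intro u hu hg
    rw [gfun_rec hu] at hg
    have hone : gfun Q (u ++ [false]) < 1 ∨ gfun Q (u ++ [true]) < 1 := by
      by_contra hc
      push_neg at hc
      have : (1 : ℝ≥0∞) ≤ 2⁻¹ * (gfun Q (u ++ [false]) + gfun Q (u ++ [true])) := by
        calc (1 : ℝ≥0∞) = 2⁻¹ * (1 + 1) := by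
              rw [one_add_one_eq_two, ENNReal.inv_mul_cancel (by norm_num) (by norm_num)]
          _ ≤ _ := by gcongr; exacts [hc.1, hc.2]
      exact absurd hg (not_lt.2 this)
    rcases hone with h' | h'
    · exact ⟨false, fun hQ' => absurd (gfun_ge_one hQ') (not_le.2 h'), h'⟩
    · exact ⟨true, fun hQ' => absurd (gfun_ge_one hQ') (not_le.2 h'), h'⟩
  choose bit hbit1 hbit2 using step
  have hnil : ([] : List Bool) ∉ Q := fun h => absurd (gfun_ge_one h) (not_le.2 h0)
  let u : ℕ → {u : List Bool // u ∉ Q ∧ gfun Q u < 1} := fun n =>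
    Nat.rec ⟨[], hnil, h0⟩
      (fun _ p => ⟨p.1 ++ [bit p.1 p.2.1 p.2.2], hbit1 p.1 p.2.1 p.2.2, hbit2 p.1 p.2.1 p.2.2⟩) n
  let x : ℕ → Bool := fun n => bit (u n).1 (u n).2.1 (u n).2.2
  have hux : ∀ n, (List.range n).map x = (u n).1 := by
    intro n
    induction n with
    | zero => rfl
    | succ n ih =>
      have : (u (n + 1)).1 = (u n).1 ++ [x n] := rfl
      rw [this, List.range_succ, List.map_append, ih]
      simp
  obtain ⟨m, hm⟩ := hQ x
  rw [hux m] at hm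
  exact (u m).2.1 hm


/-- The directed cover of a finite directed graph `G` based at `x₀`. -/
def cover {V : Type} (G : V → V → Prop) (x₀ : V) : Set (List V) := {l | List.Chain G x₀ l}

/-- If some strongly connected component of `G`, reachable from `x₀`, contains a vertex
with at least two outgoing edges staying within the component, then the branching number
of the directed cover is strictly greater than `1`. -/
theorem directed_cover_br_gt_one {V : Type} [Fintype V] (G : V → V → Prop) (x₀ : V)
    (h_inf : (cover G x₀).Infinite) (v w w' : V)
    (hreach : Relation.ReflTransGen G x₀ v)
    (h1 : G v w) (h2 : Relation.ReflTransGen G w v)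
    (h3 : G v w') (h4 : Relation.ReflTransGen G w' v)
    (hne : w ≠ w') :
    1 < br (cover G x₀) := by
  classical
  obtain ⟨P, hPc, hPl⟩ := exists_path hreach
  obtain ⟨Q1, hQ1c, hQ1l⟩ := exists_path h2
  obtain ⟨Q2, hQ2c, hQ2l⟩ := exists_path h4
  set C0 : List V := w :: Q1 with hC0
  set C1 : List V := w' :: Q2 with hC1
  have hC0c : List.Chain G v C0 := List.chain_cons.2 ⟨h1, hQ1c⟩
  have hC1c : List.Chain G v C1 := List.chain_cons.2 ⟨h3, hQ2c⟩
  have hC0l : lastOf v C0 = v := by rw [hC0, lastOf_cons, hQ1l]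
  have hC1l : lastOf v C1 = v := by rw [hC1, lastOf_cons, hQ2l]
  set L : ℕ := C0.length + C1.length with hLdef
  have hL1 : 1 ≤ L := by simp [hLdef, hC0]; omega
  set D : Bool → List V := fun b => if b then C1 ++ C0 else C0 ++ C1 with hD
  have hDchain : ∀ b, List.Chain G v (D b) := by
    intro b
    cases b
    · exact chain_append' hC0c (by rw [hC0l]; exact hC1c)
    · exact chain_append' hC1c (by rw [hC1l]; exact hC0c)
  have hDlast : ∀ b, lastOf v (D b) = v := by
    intro b
    cases b
    · show lastOf v (C0 ++ C1) = v
      rw [lastOf_append, hC0l, hC1l]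
    · show lastOf v (C1 ++ C0) = v
      rw [lastOf_append, hC1l, hC0l]
  have hDlen : ∀ b, (D b).length = L := by
    intro b; cases b <;> simp [hD, hLdef] <;> omega
  -- F facts
  have hF : ∀ s : List Bool, List.Chain G v (s.flatMap D) ∧ lastOf v (s.flatMap D) = v ∧
      (s.flatMap D).length = L * s.length := by
    intro s
    induction s with
    | nil => exact ⟨List.Chain.nil, rfl, by simp⟩
    | cons b s ih =>
      rw [List.flatMap_cons]
      refine ⟨chain_append' (hDchain b) (by rw [hDlast b]; exact ih.1), ?_, ?_⟩
      · rw [lastOf_append, hDlast b, ih.2.1]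
      · rw [List.length_append, hDlen b, ih.2.2, List.length_cons]; ring
  set p : ℕ := P.length with hp
  set word : List Bool → List V := fun s => P ++ s.flatMap D with hwordd
  have hword_chain : ∀ s, List.Chain G x₀ (word s) :=
    fun s => chain_append' hPc (by rw [hPl]; exact (hF s).1)
  have hword_len : ∀ s, (word s).length = p + L * s.length := by
    intro s; simp only [hwordd, List.length_append, (hF s).2.2, hp]
  have hword_mono : ∀ {s s' : List Bool}, s <+: s' → word s <+: word s' := by
    rintro s s' ⟨r, rfl⟩
    simp only [hwordd, List.flatMap_append, ← List.append_assoc]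
    exact List.prefix_append _ _
  -- rays
  have hray : ∀ x : ℕ → Bool, IsRay (cover G x₀)
      (fun n => (word ((List.range n).map x)).take n) := by
    intro x
    refine ⟨by simp, fun n => ⟨chain_of_prefix (List.take_prefix _ _) (hword_chain _), ?_⟩⟩
    have hbits : (List.range (n+1)).map x = (List.range n).map x ++ [x n] := by
      rw [List.range_succ, List.map_append]; rfl
    have hw1 : word ((List.range (n+1)).map x) = word ((List.range n).map x) ++ D (x n) := by
      rw [hbits]; simp [hwordd, List.flatMap_append, List.append_assoc]
    have hlenw : n < (word ((List.range n).map x) ++ D (x n)).length := by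
      rw [List.length_append, hword_len, hDlen]
      have : n ≤ L * n := Nat.le_mul_of_pos_left n hL1
      simp only [List.length_map, List.length_range]
      omega
    have hlenw2 : n ≤ (word ((List.range n).map x)).length := by
      rw [hword_len]
      have : n ≤ L * n := Nat.le_mul_of_pos_left n hL1
      simp only [List.length_map, List.length_range]
      omega
    refine ⟨(word ((List.range n).map x) ++ D (x n))[n], ?_⟩
    simp only [hw1, List.take_succ, List.getElem?_eq_getElem hlenw,
      List.take_append_of_le_length hlenw2, Option.toList_some]
  -- choose lam
  set lam : ℝ≥0∞ := (2 : ℝ≥0∞) ^ ((L : ℝ)⁻¹) with hlam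
  have hLR : (0:ℝ) < (L:ℝ)⁻¹ := by
    have : (0:ℝ) < L := by exact_mod_cast hL1
    positivity
  have hlam_gt : 1 < lam := by
    have h := ENNReal.rpow_lt_rpow_of_exponent_lt (x := 2) one_lt_two (by norm_num) hLR
    rwa [ENNReal.rpow_zero] at h
  have hlam_ne_top : lam ≠ ⊤ :=
    ENNReal.rpow_ne_top_of_nonneg (le_of_lt hLR) (by norm_num)
  have hlaminv_le_one : lam⁻¹ ≤ 1 := ENNReal.inv_le_one.2 hlam_gt.le
  have hlamL : lam⁻¹ ^ L = 2⁻¹ := by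
    rw [← ENNReal.inv_pow]
    congr 1
    rw [hlam, ← ENNReal.rpow_natCast ((2:ℝ≥0∞) ^ ((L : ℝ)⁻¹)) L, ← ENNReal.rpow_mul,
      inv_mul_cancel₀ (by positivity), ENNReal.rpow_one]
  have hlaminv_pos : 0 < lam⁻¹ := ENNReal.inv_pos.2 hlam_ne_top
  -- cutset bound
  have hcutbound : ∀ π : Set (List V), IsCutset (cover G x₀) π →
      lam⁻¹ ^ p ≤ ∑' e : π, lam⁻¹ ^ (e : List V).length := by
    intro π hπ
    set Qs : Set (List Bool) := {t | ∃ e, e ∈ π ∧ e <+: word t ∧ e.length ≤ p + L * t.length ∧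
      (t = [] ∨ p + L * (t.length - 1) < e.length)} with hQs
    -- coverage
    have hQcut : ∀ x : ℕ → Bool, ∃ m, (List.range m).map x ∈ Qs := by
      intro x
      obtain ⟨n, hn⟩ := hπ.2 _ (hray x)
      set e : List V := (word ((List.range n).map x)).take n with he
      have hel : e.length = n := by
        rw [he, List.length_take, hword_len]
        have : n ≤ L * n := Nat.le_mul_of_pos_left n hL1
        simp only [List.length_map, List.length_range]
        omega
      have hnself : n ≤ p + L * n := le_trans (Nat.le_mul_of_pos_left n hL1) (Nat.le_add_left _ _)
      have hex : ∃ m, n ≤ p + L * m := ⟨n, hnself⟩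
      set m : ℕ := Nat.find hex with hm
      have hmspec : n ≤ p + L * m := Nat.find_spec hex
      have hmn : m ≤ n := Nat.find_le hnself
      refine ⟨m, e, hn, ?_, ?_, ?_⟩
      · -- e <+: word (bits m)
        have hbits : (List.range m).map x <+: (List.range n).map x := by
          refine List.IsPrefix.map x ?_
          have hr : List.range m = (List.range n).take m := by
            rw [List.take_range, min_eq_left hmn]
          rw [hr]
          exact List.take_prefix m (List.range n)
        have h2' : word ((List.range m).map x) <+: word ((List.range n).map x) :=
          hword_mono hbits
        refine List.prefix_of_prefix_length_le (List.take_prefix _ _) h2' ?_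
        rw [hel, hword_len]
        simpa using hmspec
      · rw [hel]; simpa using hmspec
      · rcases Nat.eq_zero_or_pos m with hm0 | hm0
        · left; rw [hm0]; rfl
        · right
          have hfm := Nat.find_min hex (m := m - 1) (by omega)
          push_neg at hfm
          rw [hel]
          simp only [List.length_map, List.length_range]
          exact hfm
    -- selection
    have hsel : ∀ t : Qs, ∃ e, e ∈ π ∧ e <+: word t ∧ e.length ≤ p + L * (t : List Bool).length ∧
        ((t : List Bool) = [] ∨ p + L * ((t : List Bool).length - 1) < e.length) := fun t => t.2
    choose ψ he1 he2 he3 he4 using hsel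
    -- word shape
    have hDb : ∀ b : Bool, D b = (if b then w' else w) :: (if b then Q2 ++ C0 else Q1 ++ C1) := by
      intro b
      cases b
      · show C0 ++ C1 = w :: (Q1 ++ C1)
        rw [hC0]; rfl
      · show C1 ++ C0 = w' :: (Q2 ++ C0)
        rw [hC1]; rfl
    have hshape : ∀ (c : List Bool) (b : Bool) (r : List Bool),
        word (c ++ b :: r) = (P ++ c.flatMap D) ++
          ((if b then w' else w) :: ((if b then Q2 ++ C0 else Q1 ++ C1) ++ r.flatMap D)) := by
      intro c b r
      show P ++ (c ++ b :: r).flatMap D = _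
      rw [List.flatMap_append, List.flatMap_cons, hDb b]
      simp only [List.cons_append, List.append_assoc]
    -- injectivity
    have hinj : Function.Injective (fun t : Qs => (⟨ψ t, he1 t⟩ : π)) := by
      intro t t' hψ
      have heq : ψ t = ψ t' := congrArg Subtype.val hψ
      have hML : ∀ (u u' : Qs), (u : List Bool).length < (u' : List Bool).length →
          ψ u ≠ ψ u' := by
        intro u u' hlt hcontr
        have h4' := he4 u'
        rcases h4' with h0 | hlt'
        · rw [h0] at hlt; simp at hlt
        · have h3' := he3 u
          rw [hcontr] at h3'
          have : L * (u : List Bool).length ≤ L * ((u' : List Bool).length - 1) :=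
            Nat.mul_le_mul_left L (by omega)
          omega
      have hlen : (t : List Bool).length = (t' : List Bool).length := by
        rcases lt_trichotomy (t : List Bool).length (t' : List Bool).length with h | h | h
        · exact absurd heq (hML t t' h)
        · exact h
        · exact absurd heq.symm (hML t' t h)
      ext1
      by_contra hnee
      obtain ⟨c, b, b', r, r', hbb, hdt, hdt'⟩ := exists_diff hlen hnee
      have hpre1 : ψ t <+: word (c ++ b :: r) := hdt ▸ he2 t
      have hpre2 : ψ t <+: word (c ++ b' :: r') := heq ▸ (hdt' ▸ he2 t')
      rw [hshape] at hpre1 hpre2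
      have hheads : (if b then w' else w) ≠ (if b' then w' else w) := by
        cases b <;> cases b' <;>
          first
            | exact absurd rfl hbb
            | simpa using hne
            | simpa using hne.symm
      have hsep := sep hheads hpre1 hpre2
      rw [List.length_append, (hF c).2.2] at hsep
      have htne : (t : List Bool) ≠ [] := by rw [hdt]; simp
      have h4t := (he4 t).resolve_left htne
      have hcle : c.length ≤ (t : List Bool).length - 1 := by
        have : (t : List Bool).length = c.length + 1 + r.length := by rw [hdt]; simp; omega
        omega
      have : L * c.length ≤ L * ((t : List Bool).length - 1) := Nat.mul_le_mul_left L hcle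
      omega
    -- sum chain
    calc lam⁻¹ ^ p = lam⁻¹ ^ p * 1 := (mul_one _).symm
      _ ≤ lam⁻¹ ^ p * ∑' t : Qs, (2 : ℝ≥0∞)⁻¹ ^ (t : List Bool).length := by
          gcongr
          exact binary_cutset_sum hQcut
      _ = ∑' t : Qs, lam⁻¹ ^ (p + L * (t : List Bool).length) := by
          rw [← ENNReal.tsum_mul_left]
          refine tsum_congr fun t => ?_
          rw [pow_add, pow_mul, hlamL]
      _ ≤ ∑' t : Qs, lam⁻¹ ^ (ψ t).length := by
          refine ENNReal.tsum_le_tsum fun t => ?_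
          exact pow_le_pow_of_le_one zero_le hlaminv_le_one (he3 t)
      _ = ∑' t : Qs, lam⁻¹ ^ (((⟨ψ t, he1 t⟩ : π) : List V)).length := rfl
      _ ≤ ∑' e : π, lam⁻¹ ^ (e : List V).length :=
          ENNReal.tsum_comp_le_tsum_of_injective hinj _
  -- conclude
  have hmem : lam ∈ {l : ℝ≥0∞ | 0 < l ∧
      0 < ⨅ (π) (_ : IsCutset (cover G x₀) π), ∑' e : π, l⁻¹ ^ (e : List V).length} := by
    refine ⟨lt_trans zero_lt_one hlam_gt, ?_⟩
    have hposp : 0 < lam⁻¹ ^ p := ENNReal.pow_pos hlaminv_pos p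
    refine lt_of_lt_of_le hposp (le_iInf fun π => le_iInf fun hπ => hcutbound π hπ)
  exact lt_of_lt_of_le hlam_gt (le_sSup hmem)


end TreeNotions
end

section
/- In the tree T₀ obtained from the 1-3 tree by replacing each level-n edge with a path of length n, a vertex of the 1-3 tree at level n lies at distance 1 + 2 + ⋯ + n = n(n+1)/2 from the root of T₀; consequently, the number of vertices of T₀ at distance m from the root is at most 2^{⌈√(2m)⌉+1} · 3, and in particular log|B(m)| = Θ(√m). -/
open Filter ENNReal

namespace TreeNotions

private def tri : ℕ → ℕ
  | 0 => 0
  | n + 1 => tri n + (n + 1)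

private lemma two_tri (n : ℕ) : 2 * tri n = n * (n + 1) := by
  induction n with
  | zero => rfl
  | succ n ih => rw [tri, Nat.mul_add, ih]; ring

private lemma tri_mono : StrictMono tri :=
  strictMono_nat_of_lt_succ fun n => by rw [tri]; omega

private lemma self_le_tri (n : ℕ) : n ≤ tri n := by
  induction n with
  | zero => simp
  | succ n ih => rw [tri]; omega

private lemma length_expandFrom (w : List ℕ) (k : ℕ) :
    (expandFrom k w).length = w.length * k + tri w.length := by
  induction w generalizing k with
  | nil => simp [expandFrom, tri]
  | cons a rest ih =>
    simp only [expandFrom, List.length_append, List.length_cons, List.length_replicate,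
      ih (k + 1), tri]
    ring

private lemma expandFrom_append (x y : List ℕ) (k : ℕ) :
    expandFrom k (x ++ y) = expandFrom k x ++ expandFrom (k + x.length) y := by
  induction x generalizing k with
  | nil => simp [expandFrom]
  | cons a rest ih =>
    simp only [List.cons_append, expandFrom, List.append_eq, ih (k + 1),
      List.append_assoc, List.length_cons]
    rw [show k + (rest.length + 1) = k + 1 + rest.length by omega]

private lemma expandFrom_take_prefix (w : List ℕ) (n k : ℕ) :
    expandFrom k (w.take n) <+: expandFrom k w := by
  conv_rhs => rw [← List.take_append_drop n w]
  rw [expandFrom_append]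
  exact List.prefix_append _ _

private lemma expandFrom_inj : ∀ (v w : List ℕ) (k : ℕ), v.length = w.length →
    expandFrom k v = expandFrom k w → v = w := by
  intro v
  induction v with
  | nil => intro w k hl _; exact (List.length_eq_zero_iff.mp hl.symm).symm
  | cons a rest ih =>
    rintro (_ | ⟨b, s⟩) k hl he
    · simp at hl
    · simp only [expandFrom, List.cons_append, List.cons.injEq] at he
      obtain ⟨rfl, he⟩ := he
      have := List.append_cancel_left he
      simp only [List.length_cons, Nat.add_right_cancel_iff] at hl
      rw [ih s (k + 1) hl this]

private lemma snd_mem_enum {β : Type} {l : List β} {p : ℕ × β} (h : (Prod.swap p) ∈ l.zipIdx) : p.2 ∈ l :=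
  List.fst_mem_of_mem_zipIdx h

private lemma mem_T13Level_succ {w : List ℕ} {n : ℕ} :
    w ∈ T13Level (n + 1) ↔
      ∃ p ∈ (T13Level n).zipIdx, ∃ j < childCount n p.2, w = p.1 ++ [j] := by
  simp only [T13Level, List.mem_flatMap, List.mem_map, List.mem_range]
  constructor
  · rintro ⟨p, hp, j, hj, rfl⟩; exact ⟨p, hp, j, hj, rfl⟩
  · rintro ⟨p, hp, j, hj, rfl⟩; exact ⟨p, hp, j, hj, rfl⟩

private lemma length_of_mem_T13Level : ∀ n, ∀ w ∈ T13Level n, w.length = n := by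
  intro n
  induction n with
  | zero => intro w hw; simp only [T13Level, List.mem_singleton] at hw; simp [hw]
  | succ n ih =>
    intro w hw
    obtain ⟨p, hp, j, hj, rfl⟩ := mem_T13Level_succ.mp hw
    simp [ih p.1 (List.fst_mem_of_mem_zipIdx hp)]

private lemma childCount_le_3 (n i : ℕ) : childCount n i ≤ 3 := by
  unfold childCount; split_ifs <;> omega

private lemma lt3_of_mem_T13Level : ∀ n, ∀ w ∈ T13Level n, ∀ a ∈ w, a < 3 := by
  intro n
  induction n with
  | zero => intro w hw a ha; simp only [T13Level, List.mem_singleton] at hw; subst hw; simp at ha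
  | succ n ih =>
    intro w hw a ha
    obtain ⟨p, hp, j, hj, rfl⟩ := mem_T13Level_succ.mp hw
    rcases List.mem_append.mp ha with h | h
    · exact ih p.1 (List.fst_mem_of_mem_zipIdx hp) a h
    · have := childCount_le_3 n p.2
      simp only [List.mem_singleton] at h
      omega

private lemma sum_childCount_lt (h : ℕ) : ∀ c, c ≤ h →
    ((List.range c).map (fun i => if i < h then 1 else 3)).sum = c := by
  intro c
  induction c with
  | zero => simp
  | succ c ih =>
    intro hc
    rw [List.sum_range_succ]
    rw [ih (by omega), if_pos (by omega)]

private lemma sum_childCount (h : ℕ) : ∀ b,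
    ((List.range (h + b)).map (fun i => if i < h then 1 else 3)).sum = h + 3 * b := by
  intro b
  induction b with
  | zero => simpa using sum_childCount_lt h h le_rfl
  | succ b ih =>
    rw [show h + (b + 1) = (h + b) + 1 by omega, List.sum_range_succ, ih,
      if_neg (by omega)]
    omega

private lemma T13Level_length : ∀ n, (T13Level n).length = 2 ^ n := by
  intro n
  induction n with
  | zero => rfl
  | succ n ih =>
    show ((T13Level n).zipIdx.flatMap fun p =>
      (List.range (childCount n p.2)).map fun j => p.1 ++ [j]).length = 2 ^ (n + 1)
    rw [List.length_flatMap]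
    have : (List.map (fun p : List ℕ × ℕ =>
        ((List.range (childCount n p.2)).map fun j => p.1 ++ [j]).length) (T13Level n).zipIdx)
        = List.map (childCount n) (List.range (T13Level n).length) := by
      rw [List.range_eq_range', ← List.zipIdx_map_snd 0 (T13Level n), List.map_map]
      apply List.map_congr_left
      intro p _
      simp
    rw [this, ih]
    cases n with
    | zero => rfl
    | succ k =>
      have h2 : (2:ℕ) ^ (k + 1) = 2 ^ k + 2 ^ k := by ring
      have : List.map (childCount (k + 1)) (List.range (2 ^ (k + 1)))
          = (List.range (2 ^ k + 2 ^ k)).map (fun i => if i < 2 ^ k then 1 else 3) := by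
        rw [h2]
        apply List.map_congr_left
        intro i _
        simp [childCount]
      rw [this, sum_childCount]
      ring

private lemma T13Level_nodup : ∀ n, (T13Level n).Nodup := by
  intro n
  induction n with
  | zero => simp [T13Level]
  | succ n ih =>
    show ((T13Level n).zipIdx.flatMap fun p =>
      (List.range (childCount n p.2)).map fun j => p.1 ++ [j]).Nodup
    rw [List.nodup_flatMap]
    constructor
    · intro p _
      refine List.nodup_range.map ?_
      intro i j hij
      simpa using List.append_cancel_left hij
    · have h1 : List.Pairwise (fun p q : List ℕ × ℕ => p.1 ≠ q.1) (T13Level n).zipIdx := by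
        have := ih
        rw [List.Nodup, ← List.zipIdx_map_fst 0 (T13Level n), List.pairwise_map] at this
        exact this
      refine h1.imp ?_
      intro p q hpq
      intro x hxp hxq
      simp only [List.mem_map, List.mem_range] at hxp hxq
      obtain ⟨i, _, rfl⟩ := hxp
      obtain ⟨j, _, hj⟩ := hxq
      exact hpq (List.append_inj' hj.symm rfl).1

private lemma take_mem_T13Level : ∀ N n, n ≤ N → ∀ w ∈ T13Level N, w.take n ∈ T13Level n := by
  intro N
  induction N with
  | zero => intro n hn w hw; interval_cases n; simp [T13Level]
  | succ N ih =>
    intro n hn w hw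
    rcases Nat.eq_or_lt_of_le hn with rfl | hlt
    · rwa [List.take_of_length_le (le_of_eq (length_of_mem_T13Level _ w hw))]
    · obtain ⟨p, hp, j, hj, rfl⟩ := mem_T13Level_succ.mp hw
      have hl : p.1.length = N := length_of_mem_T13Level _ _ (List.fst_mem_of_mem_zipIdx hp)
      rw [List.take_append_of_le_length (by omega)]
      exact ih n (by omega) p.1 (List.fst_mem_of_mem_zipIdx hp)

private lemma mem_T13Level_of_mem_T13 {w : List ℕ} (h : w ∈ T13) : w ∈ T13Level w.length := by
  obtain ⟨n, hn⟩ := h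
  rwa [length_of_mem_T13Level n w hn]

/-- structural covering of a level of `T0` -/
private lemma level_T0_subset {n m : ℕ} (h1 : tri n ≤ m) (h2 : m < tri (n + 1)) :
    level T0 m ⊆ (fun q : List ℕ × ℕ =>
      expandFrom 0 q.1 ++ (q.2 :: List.replicate n 0).take (m - tri n)) ''
      {q : List ℕ × ℕ | q.1 ∈ T13Level n ∧ q.2 < 3} := by
  rintro u ⟨⟨w, hw, hpre⟩, hlen⟩
  have hwN : w ∈ T13Level w.length := mem_T13Level_of_mem_T13 hw
  set N := w.length with hN
  have hexp : (expandFrom 0 w).length = tri N := by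
    rw [length_expandFrom, ← hN]; omega
  have hmN : m ≤ tri N := by
    have := hpre.length_le
    rw [hexp] at this; omega
  have hnN : n ≤ N := tri_mono.le_iff_le.mp (le_trans h1 hmN)
  have hvmem : w.take n ∈ T13Level n := take_mem_T13Level N n hnN w hwN
  have hvlen : (w.take n).length = n := by rw [List.length_take]; omega
  have hvexplen : (expandFrom 0 (w.take n)).length = tri n := by
    rw [length_expandFrom, hvlen]; omega
  rcases Nat.eq_zero_or_pos (m - tri n) with hr | hr
  · refine ⟨(w.take n, 0), ⟨hvmem, by omega⟩, ?_⟩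
    simp only [hr, List.take_zero, List.append_nil]
    have hpre2 : expandFrom 0 (w.take n) <+: expandFrom 0 w := expandFrom_take_prefix w n 0
    have : expandFrom 0 (w.take n) <+: u :=
      List.prefix_of_prefix_length_le hpre2 hpre (by omega)
    exact this.eq_of_length (by omega)
  · have hlt : n < N := tri_mono.lt_iff_lt.mp (by omega)
    have ha3 : w[n] < 3 := lt3_of_mem_T13Level N w hwN _ (List.getElem_mem hlt)
    refine ⟨(w.take n, w[n]), ⟨hvmem, ha3⟩, ?_⟩
    have htake : w.take (n + 1) = w.take n ++ [w[n]] := by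
      rw [List.take_succ, List.getElem?_eq_getElem hlt]
      rfl
    have hE : expandFrom 0 (w.take (n + 1)) =
        expandFrom 0 (w.take n) ++ (w[n] :: List.replicate n 0) := by
      rw [htake, expandFrom_append, hvlen]
      simp [expandFrom]
    have hpreE : expandFrom 0 (w.take n) ++ (w[n] :: List.replicate n 0).take (m - tri n)
        <+: expandFrom 0 w := by
      refine List.IsPrefix.trans ?_ (expandFrom_take_prefix w (n + 1) 0)
      rw [hE]
      exact ⟨(w[n] :: List.replicate n 0).drop (m - tri n), by
        rw [List.append_assoc, List.take_append_drop]⟩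
    have hrle : m - tri n ≤ n + 1 := by
      have := two_tri (n + 1)
      have h2' : tri (n + 1) = tri n + (n + 1) := rfl
      omega
    have hflen : (expandFrom 0 (w.take n) ++
        (w[n] :: List.replicate n 0).take (m - tri n)).length = m := by
      simp [List.length_take, hvexplen]
      omega
    have : expandFrom 0 (w.take n) ++ (w[n] :: List.replicate n 0).take (m - tri n) <+: u :=
      List.prefix_of_prefix_length_le hpreE hpre (by omega)
    exact this.eq_of_length (by omega)

private lemma level_T0_card {n m : ℕ} (h1 : tri n ≤ m) (h2 : m < tri (n + 1)) :
    (level T0 m).Finite ∧ (level T0 m).ncard ≤ 2 ^ n * 3 := by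
  classical
  have hsub := level_T0_subset h1 h2
  have hset : {q : List ℕ × ℕ | q.1 ∈ T13Level n ∧ q.2 < 3} =
      ↑((T13Level n).toFinset ×ˢ Finset.range 3) := by
    ext q
    simp [Finset.mem_product]
  rw [hset] at hsub
  have hSfin : (↑((T13Level n).toFinset ×ˢ Finset.range 3) : Set (List ℕ × ℕ)).Finite :=
    Finset.finite_toSet _
  have hfin : (level T0 m).Finite := (hSfin.image _).subset hsub
  refine ⟨hfin, ?_⟩
  calc (level T0 m).ncard ≤ _ := Set.ncard_le_ncard hsub (hSfin.image _)
    _ ≤ (↑((T13Level n).toFinset ×ˢ Finset.range 3) : Set (List ℕ × ℕ)).ncard :=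
        Set.ncard_image_le hSfin
    _ = ((T13Level n).toFinset ×ˢ Finset.range 3).card := Set.ncard_coe_finset _
    _ ≤ 2 ^ n * 3 := by
        rw [Finset.card_product, Finset.card_range,
          List.toFinset_card_of_nodup (T13Level_nodup n), T13Level_length]

/-- the level index function -/
private def nn (m : ℕ) : ℕ := Nat.findGreatest (fun k => tri k ≤ m) m

private lemma tri_nn_le (m : ℕ) : tri (nn m) ≤ m :=
  Nat.findGreatest_spec (P := fun k => tri k ≤ m) (Nat.zero_le m) (Nat.zero_le m)

private lemma lt_tri_nn_succ (m : ℕ) : m < tri (nn m + 1) := by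
  by_contra hc
  push_neg at hc
  have h1 : nn m + 1 ≤ m := le_trans (self_le_tri _) hc
  exact Nat.findGreatest_is_greatest (P := fun k => tri k ≤ m) (Nat.lt_succ_self _) h1 hc

private lemma nn_mono {m m' : ℕ} (h : m ≤ m') : nn m ≤ nn m' :=
  Nat.le_findGreatest (P := fun k => tri k ≤ m') (le_trans (le_trans (self_le_tri _) (tri_nn_le m)) h)
    (le_trans (tri_nn_le m) h)

private lemma one_le_nn {m : ℕ} (h : 1 ≤ m) : 1 ≤ nn m :=
  Nat.le_findGreatest (P := fun k => tri k ≤ m) h (by simpa [show tri 1 = 1 from rfl] using h)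

private lemma level_T0_card' (m : ℕ) :
    (level T0 m).Finite ∧ (level T0 m).ncard ≤ 2 ^ nn m * 3 :=
  level_T0_card (tri_nn_le m) (lt_tri_nn_succ m)

private lemma ball_zero : ball T0 0 = level T0 0 := by
  ext u; simp [ball, level]

private lemma ball_succ (m : ℕ) : ball T0 (m + 1) = ball T0 m ∪ level T0 (m + 1) := by
  ext u
  simp only [ball, level, Set.mem_setOf_eq, Set.mem_union]
  constructor
  · rintro ⟨h1, h2⟩
    rcases Nat.lt_or_ge u.length (m + 1) with h | h
    · exact Or.inl ⟨h1, by omega⟩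
    · exact Or.inr ⟨h1, by omega⟩
  · rintro (⟨h1, h2⟩ | ⟨h1, h2⟩) <;> exact ⟨h1, by omega⟩

private lemma ball_T0_bounds (m : ℕ) :
    (ball T0 m).Finite ∧ (ball T0 m).ncard ≤ (m + 1) * (2 ^ nn m * 3) := by
  induction m with
  | zero =>
    rw [ball_zero]
    exact ⟨(level_T0_card' 0).1, by simpa using (level_T0_card' 0).2⟩
  | succ m ih =>
    rw [ball_succ]
    refine ⟨ih.1.union (level_T0_card' (m + 1)).1, ?_⟩
    calc (ball T0 m ∪ level T0 (m + 1)).ncard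
        ≤ (ball T0 m).ncard + (level T0 (m + 1)).ncard := Set.ncard_union_le _ _
      _ ≤ (m + 1) * (2 ^ nn m * 3) + 2 ^ nn (m + 1) * 3 :=
          Nat.add_le_add ih.2 (level_T0_card' (m + 1)).2
      _ ≤ (m + 1 + 1) * (2 ^ nn (m + 1) * 3) := by
          have h2 : (2:ℕ) ^ nn m ≤ 2 ^ nn (m + 1) :=
            Nat.pow_le_pow_right (by omega) (nn_mono (by omega))
          nlinarith

private lemma ball_T0_lower (m : ℕ) : 2 ^ nn m ≤ (ball T0 m).ncard := by
  classical
  have himg : expandFrom 0 '' {v | v ∈ T13Level (nn m)} ⊆ ball T0 m := by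
    rintro u ⟨v, hv, rfl⟩
    have hvl : v.length = nn m := length_of_mem_T13Level _ v hv
    refine ⟨⟨v, ⟨nn m, hv⟩, List.prefix_refl _⟩, ?_⟩
    rw [length_expandFrom, hvl]
    have := tri_nn_le m
    omega
  have hinj : Set.InjOn (expandFrom 0) {v | v ∈ T13Level (nn m)} := by
    intro v hv w hw h
    exact expandFrom_inj v w 0
      (by rw [length_of_mem_T13Level _ v hv, length_of_mem_T13Level _ w hw]) h
  have hcard : (expandFrom 0 '' {v | v ∈ T13Level (nn m)}).ncard = 2 ^ nn m := by
    rw [Set.ncard_image_of_injOn hinj]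
    have hset : {v | v ∈ T13Level (nn m)} = ↑(T13Level (nn m)).toFinset := by
      ext v; simp
    rw [hset, Set.ncard_coe_finset,
      List.toFinset_card_of_nodup (T13Level_nodup _), T13Level_length]
  rw [← hcard]
  exact Set.ncard_le_ncard himg (ball_T0_bounds m).1

end TreeNotions

open TreeNotions in
/-- In `T₀`, a vertex of the 1-3 tree at level `n` lies at distance `n(n+1)/2` from the
root; the number of vertices of `T₀` at distance `m` is at most `2^{⌈√(2m)⌉+1} · 3`; and
`log |B(m)| = Θ(√m)`. -/
theorem T0_distances_and_ball_growth :
    (∀ w ∈ T13, (expandFrom 0 w).length = w.length * (w.length + 1) / 2) ∧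
    (∀ m : ℕ, (Nat.card (level T0 m) : ℝ) ≤ 2 ^ (⌈Real.sqrt (2 * m)⌉₊ + 1) * 3) ∧
    (∃ c₁ c₂ : ℝ, 0 < c₁ ∧ 0 < c₂ ∧ ∀ m : ℕ, 1 ≤ m →
      c₁ * Real.sqrt m ≤ Real.log (Nat.card (ball T0 m)) ∧
      Real.log (Nat.card (ball T0 m)) ≤ c₂ * Real.sqrt m) := by
  have hsqrt4 : ∀ x : ℝ, 0 ≤ x → Real.sqrt (4 * x) = 2 * Real.sqrt x := by
    intro x hx
    rw [show (4:ℝ) * x = 2 ^ 2 * x by norm_num, Real.sqrt_mul (by positivity) x,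
      Real.sqrt_sq (by norm_num)]
  refine ⟨?_, ?_, ?_⟩
  · intro w _
    rw [length_expandFrom]
    have := two_tri w.length
    omega
  · intro m
    have hcard : Nat.card (level T0 m) ≤ 2 ^ nn m * 3 := by
      rw [Nat.card_coe_set_eq]
      exact (level_T0_card' m).2
    have hnat : nn m ^ 2 ≤ 2 * m := by nlinarith [two_tri (nn m), tri_nn_le m]
    have h1 : ((nn m : ℕ) : ℝ) ≤ Real.sqrt (2 * m) := by
      calc ((nn m : ℕ) : ℝ) = Real.sqrt (((nn m : ℕ) : ℝ) ^ 2) :=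
            (Real.sqrt_sq (Nat.cast_nonneg _)).symm
        _ ≤ Real.sqrt (2 * m) := Real.sqrt_le_sqrt (by exact_mod_cast hnat)
    have hnn : nn m ≤ ⌈Real.sqrt (2 * m)⌉₊ := by
      calc nn m = ⌈((nn m : ℕ) : ℝ)⌉₊ := (Nat.ceil_natCast _).symm
        _ ≤ ⌈Real.sqrt (2 * m)⌉₊ := Nat.ceil_mono h1
    calc (Nat.card (level T0 m) : ℝ) ≤ ((2 ^ nn m * 3 : ℕ) : ℝ) := by exact_mod_cast hcard
      _ = 2 ^ nn m * 3 := by push_cast; ring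
      _ ≤ 2 ^ (⌈Real.sqrt (2 * m)⌉₊ + 1) * 3 := by
          have h2 : (2:ℝ) ^ nn m ≤ 2 ^ (⌈Real.sqrt (2 * m)⌉₊ + 1) :=
            pow_le_pow_right₀ (by norm_num) (by omega)
          linarith
  · refine ⟨Real.log 2 / 3, 10, by positivity, by norm_num, ?_⟩
    intro m hm
    set n := nn m with hn
    have hn1 : 1 ≤ n := one_le_nn hm
    have htri : tri n ≤ m := tri_nn_le m
    have htri2 : m < tri (n + 1) := lt_tri_nn_succ m
    have hb1 : 2 ^ n ≤ (ball T0 m).ncard := ball_T0_lower m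
    have hb2 : (ball T0 m).ncard ≤ (m + 1) * (2 ^ n * 3) := (ball_T0_bounds m).2
    have hcard : Nat.card (ball T0 m) = (ball T0 m).ncard := Nat.card_coe_set_eq _
    rw [hcard]
    set g := (ball T0 m).ncard with hg
    have hgpos : 0 < g := lt_of_lt_of_le (Nat.pow_pos (by norm_num : 0 < 2)) hb1
    have hgposR : (0:ℝ) < g := by exact_mod_cast hgpos
    have hm1 : (1:ℝ) ≤ m := by exact_mod_cast hm
    have hsm : (1:ℝ) ≤ Real.sqrt m := by
      rw [show (1:ℝ) = Real.sqrt 1 by simp]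
      exact Real.sqrt_le_sqrt hm1
    have hnsq : (n : ℝ) ≤ 2 * Real.sqrt m := by
      have hnat : n ^ 2 ≤ 2 * m := by nlinarith [two_tri n, htri]
      calc (n : ℝ) = Real.sqrt ((n : ℝ) ^ 2) := (Real.sqrt_sq (Nat.cast_nonneg _)).symm
        _ ≤ Real.sqrt (4 * m) := Real.sqrt_le_sqrt (by
            have : ((n : ℝ)) ^ 2 ≤ 2 * m := by exact_mod_cast hnat
            linarith)
        _ = 2 * Real.sqrt m := hsqrt4 m (by positivity)
    have hsmn : Real.sqrt m ≤ 3 * n := by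
      have h9 : m ≤ 9 * (n * n) := by
        nlinarith [two_tri (n + 1), htri2, Nat.mul_le_mul hn1 (le_refl n)]
      calc Real.sqrt m ≤ Real.sqrt ((3 * (n : ℝ)) ^ 2) := Real.sqrt_le_sqrt (by
            have : (m : ℝ) ≤ 9 * (n * n) := by exact_mod_cast h9
            nlinarith)
        _ = 3 * n := Real.sqrt_sq (by positivity)
    constructor
    · have hlog2 : (0:ℝ) < Real.log 2 := Real.log_pos (by norm_num)
      have h2n : ((2:ℝ)) ^ n ≤ g := by exact_mod_cast hb1
      have hlogle : Real.log ((2:ℝ) ^ n) ≤ Real.log g :=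
        Real.log_le_log (by positivity) h2n
      rw [Real.log_pow] at hlogle
      calc Real.log 2 / 3 * Real.sqrt m ≤ Real.log 2 / 3 * (3 * n) := by
            apply mul_le_mul_of_nonneg_left hsmn (by positivity)
        _ = (n : ℝ) * Real.log 2 := by ring
        _ ≤ Real.log g := hlogle
    · have hgle : (g : ℝ) ≤ ((m : ℝ) + 1) * (2 ^ n * 3) := by
        calc (g : ℝ) ≤ (((m + 1) * (2 ^ n * 3) : ℕ) : ℝ) := by exact_mod_cast hb2
          _ = ((m : ℝ) + 1) * (2 ^ n * 3) := by push_cast; ring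
      have hlog : Real.log g ≤ Real.log (((m : ℝ) + 1) * (2 ^ n * 3)) :=
        Real.log_le_log hgposR hgle
      rw [Real.log_mul (by positivity) (by positivity),
        Real.log_mul (by positivity) (by positivity), Real.log_pow] at hlog
      have hlogm : Real.log ((m : ℝ) + 1) ≤ 4 * Real.sqrt m := by
        have h1 : Real.log ((m : ℝ) + 1) = 2 * Real.log (Real.sqrt ((m : ℝ) + 1)) := by
          rw [Real.log_sqrt (by positivity)]; ring
        have h2 : Real.log (Real.sqrt ((m : ℝ) + 1)) ≤ Real.sqrt ((m : ℝ) + 1) - 1 :=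
          Real.log_le_sub_one_of_pos (by positivity)
        have h3 : Real.sqrt ((m : ℝ) + 1) ≤ 2 * Real.sqrt m := by
          calc Real.sqrt ((m : ℝ) + 1) ≤ Real.sqrt (4 * m) :=
                Real.sqrt_le_sqrt (by linarith)
            _ = 2 * Real.sqrt m := hsqrt4 m (by positivity)
        linarith
      have hlog2le : Real.log 2 ≤ 1 := by
        have := Real.log_le_sub_one_of_pos (by norm_num : (0:ℝ) < 2); linarith
      have hlog3le : Real.log 3 ≤ 2 * Real.sqrt m := by
        have := Real.log_le_sub_one_of_pos (by norm_num : (0:ℝ) < 3)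
        linarith
      have hnlog : (n : ℝ) * Real.log 2 ≤ 2 * Real.sqrt m := by
        have h4 : (n : ℝ) * Real.log 2 ≤ (2 * Real.sqrt m) * 1 :=
          mul_le_mul hnsq hlog2le (Real.log_nonneg (by norm_num)) (by positivity)
        linarith
      linarith
end

section
/- For every α ∈ (0,1) there exists a subperiodic infinite locally finite tree T with Ibr(T) = 0 and Igr(T) = α. -/
open Filter ENNReal

namespace IGRwit
open TreeNotions

noncomputable def g (s : ℝ) (k : ℕ) : ℕ := ⌈((k:ℝ)+1) ^ s⌉₊

noncomputable def D (s : ℝ) (k i : ℕ) : ℕ := ∑ j ∈ Finset.range i, g s (k + j)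

noncomputable def seq (s : ℝ) (k p : ℕ) (c : ℕ → ℕ) : ℕ → ℕ :=
  fun m => ∑ i ∈ Finset.range (m+1), if p + D s k i = m then c i else 0

def OK (k : ℕ) (c : ℕ → ℕ) : Prop :=
  (∀ i, c i ≤ 2) ∧ (∀ i, c (i+1) ≠ 0 → c i ≠ 0) ∧ (∀ i, c i ≠ 0 → i ≤ k)

def X (s : ℝ) : Set (ℕ → ℕ) := {x | ∃ k p c, OK k c ∧ x = seq s k p c}

noncomputable def TT (s : ℝ) : Set (List ℕ) := treeOf (X s)

lemma g_pos (s : ℝ) (k : ℕ) : 0 < g s k :=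
  Nat.ceil_pos.2 (Real.rpow_pos_of_pos (by positivity) s)

lemma g_mono {s : ℝ} (hs : 0 ≤ s) {k l : ℕ} (h : k ≤ l) : g s k ≤ g s l := by
  apply Nat.ceil_le_ceil
  have : ((k:ℝ)) ≤ (l:ℝ) := Nat.cast_le.2 h
  apply Real.rpow_le_rpow (by positivity) (by linarith) hs

lemma D_succ' (s : ℝ) (k i : ℕ) : D s k (i+1) = g s k + D s (k+1) i := by
  unfold D
  rw [Finset.sum_range_succ']
  simp [add_comm, add_assoc, add_left_comm]

lemma D_succ (s : ℝ) (k i : ℕ) : D s k (i+1) = D s k i + g s (k+i) := by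
  unfold D; rw [Finset.sum_range_succ]

lemma D_lt_succ (s : ℝ) (k i : ℕ) : D s k i < D s k (i+1) := by
  rw [D_succ]; have := g_pos s (k+i); omega

lemma D_strictMono (s : ℝ) (k : ℕ) : StrictMono (D s k) :=
  strictMono_nat_of_lt_succ (fun i => D_lt_succ s k i)

lemma le_D (s : ℝ) (k i : ℕ) : i ≤ D s k i := by
  induction i with
  | zero => simp [D]
  | succ n ih => have := D_lt_succ s k n; omega

lemma D_mono_k {s : ℝ} (hs : 0 ≤ s) {k l : ℕ} (h : k ≤ l) (i : ℕ) : D s k i ≤ D s l i := by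
  unfold D
  exact Finset.sum_le_sum (fun j _ => g_mono hs (by omega))

lemma seq_marker {s : ℝ} {k p i m : ℕ} (c : ℕ → ℕ) (h : p + D s k i = m) :
    seq s k p c m = c i := by
  unfold seq
  rw [Finset.sum_eq_single i]
  · simp [h]
  · intro j _ hji
    have : p + D s k j ≠ m := by
      intro hj
      exact hji ((D_strictMono s k).injective (by omega))
    simp [this]
  · intro hi
    exfalso
    have h1 := le_D s k i
    simp only [Finset.mem_range] at hi
    omega

lemma seq_zero {s : ℝ} {k p m : ℕ} (c : ℕ → ℕ) (h : ∀ i, p + D s k i = m → c i = 0) :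
    seq s k p c m = 0 := by
  unfold seq
  apply Finset.sum_eq_zero
  intro i _
  by_cases hi : p + D s k i = m
  · simp [hi, h i hi]
  · simp [hi]

lemma seq_ne_zero {s : ℝ} {k p m : ℕ} {c : ℕ → ℕ} (h : seq s k p c m ≠ 0) :
    ∃ i, p + D s k i = m ∧ c i ≠ 0 := by
  by_contra hc
  push_neg at hc
  exact h (seq_zero c (fun i hi => hc i hi))

lemma seq_le_two {s : ℝ} {k p : ℕ} {c : ℕ → ℕ} (hc : ∀ i, c i ≤ 2) (m : ℕ) :
    seq s k p c m ≤ 2 := by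
  by_cases h : seq s k p c m = 0
  · omega
  · obtain ⟨i, hi, _⟩ := seq_ne_zero h
    rw [seq_marker c hi]; exact hc i

lemma x_le_two {s : ℝ} {x : ℕ → ℕ} (hx : x ∈ X s) (m : ℕ) : x m ≤ 2 := by
  obtain ⟨k, p, c, hOK, rfl⟩ := hx
  exact seq_le_two hOK.1 m

-- pref lemmas
lemma pref_length (x : ℕ → ℕ) (n : ℕ) : (pref x n).length = n := by simp [pref]

lemma pref_succ (x : ℕ → ℕ) (n : ℕ) : pref x (n+1) = pref x n ++ [x n] := by
  simp [pref, List.range_succ]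

lemma pref_getD {x : ℕ → ℕ} {m n : ℕ} (h : m < n) : (pref x n).getD m 0 = x m := by
  rw [List.getD_eq_getElem _ _ (by simpa [pref_length] using h)]
  simp [pref]

lemma pref_congr {x y : ℕ → ℕ} {n : ℕ} (h : ∀ m < n, x m = y m) : pref x n = pref y n := by
  induction n with
  | zero => rfl
  | succ n ih =>
    rw [pref_succ, pref_succ, ih (fun m hm => h m (by omega)), h n (by omega)]

lemma pref_eq_imp {x y : ℕ → ℕ} {n : ℕ} (h : pref x n = pref y n) : ∀ m < n, x m = y m := by
  intro m hm
  rw [← pref_getD (x := x) hm, ← pref_getD (x := y) hm, h]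

lemma pref_append (x : ℕ → ℕ) (m j : ℕ) :
    pref x (m + j) = pref x m ++ pref (fun i => x (m + i)) j := by
  induction j with
  | zero => simp [pref]
  | succ j ih => rw [← add_assoc, pref_succ, ih, pref_succ, List.append_assoc]

lemma pref_prefix (x : ℕ → ℕ) {m n : ℕ} (h : m ≤ n) : pref x m <+: pref x n := by
  obtain ⟨j, rfl⟩ := Nat.exists_eq_add_of_le h
  rw [pref_append]
  exact List.prefix_append _ _

lemma pref_mem_T {s : ℝ} {x : ℕ → ℕ} (hx : x ∈ X s) (n : ℕ) : pref x n ∈ TT s :=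
  ⟨x, hx, n, rfl⟩

lemma mem_T_form {s : ℝ} {w : List ℕ} (hw : w ∈ TT s) : ∃ x ∈ X s, w = pref x w.length := by
  obtain ⟨x, hx, n, rfl⟩ := hw
  exact ⟨x, hx, by rw [pref_length]⟩

lemma zero_mem_X (s : ℝ) : (fun _ => 0) ∈ X s := by
  refine ⟨0, 0, fun _ => 0, ⟨fun _ => by norm_num, fun i h => h, fun i h => (h rfl).elim⟩, ?_⟩
  funext m
  exact (seq_zero _ (fun _ _ => rfl)).symm

end IGRwit

namespace IGRwit
open TreeNotions

lemma nil_mem_T (s : ℝ) : ([] : List ℕ) ∈ TT s := pref_mem_T (zero_mem_X s) 0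

lemma T_last_le_two {s : ℝ} {v : List ℕ} {b : ℕ} (h : v ++ [b] ∈ TT s) : b ≤ 2 := by
  obtain ⟨x, hx, hv⟩ := mem_T_form h
  have hl : (v ++ [b]).length = v.length + 1 := by simp
  rw [hl, pref_succ] at hv
  have : b = x v.length := by
    have := List.append_inj_right hv (by simp [pref_length])
    simpa using this
  rw [this]
  exact x_le_two hx _

lemma isTree_T (s : ℝ) : IsTree (TT s) := by
  refine ⟨nil_mem_T s, ?_, ?_, ?_⟩
  · rintro v ⟨x, hx, n, rfl⟩
    cases n with
    | zero => exact nil_mem_T s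
    | succ n =>
      rw [pref_succ, List.dropLast_concat]
      exact pref_mem_T hx n
  · intro v _
    apply Set.Finite.subset (Set.finite_Iic 2)
    intro b hb
    exact T_last_le_two hb
  · apply Set.infinite_of_injective_forall_mem
      (f := fun n : ℕ => pref (fun _ => 0) n)
    · intro m n h
      have := congrArg List.length h
      simpa [pref_length] using this
    · intro n
      exact pref_mem_T (zero_mem_X s) n

-- shift invariance
lemma shift_mem_X {s : ℝ} {x : ℕ → ℕ} (hx : x ∈ X s) : (fun i => x (i+1)) ∈ X s := by
  obtain ⟨k, p, c, hOK, rfl⟩ := hx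
  cases p with
  | succ p =>
    refine ⟨k, p, c, hOK, funext fun m => ?_⟩
    by_cases h : ∃ i, p + D s k i = m
    · obtain ⟨i, hi⟩ := h
      rw [seq_marker c (show p + 1 + D s k i = m + 1 by omega), seq_marker c hi]
    · push_neg at h
      rw [seq_zero c (fun i hi => absurd (show p + D s k i = m by omega) (h i)),
        seq_zero c (fun i hi => absurd (show p + D s k i = m by omega) (h i))]
  | zero =>
    have hg := g_pos s k
    refine ⟨k+1, g s k - 1, fun i => c (i+1),
      ⟨fun i => hOK.1 _, fun i h => hOK.2.1 _ h, fun i h => by have := hOK.2.2 _ h; omega⟩,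
      funext fun m => ?_⟩
    by_cases h : ∃ i, (g s k - 1) + D s (k+1) i = m
    · obtain ⟨i, hi⟩ := h
      have : (0:ℕ) + D s k (i+1) = m + 1 := by
        rw [zero_add, D_succ']; omega
      rw [seq_marker c this, seq_marker (fun i => c (i+1)) hi]
    · push_neg at h
      rw [seq_zero _ (fun i hi => absurd hi (h i))]
      apply seq_zero
      intro j hj
      exfalso
      cases j with
      | zero => rw [zero_add] at hj; simp [D] at hj
      | succ i =>
        rw [zero_add, D_succ'] at hj
        exact h i (by omega)

lemma shift_iter_mem_X {s : ℝ} (m : ℕ) {x : ℕ → ℕ} (hx : x ∈ X s) :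
    (fun i => x (i + m)) ∈ X s := by
  induction m with
  | zero => simpa using hx
  | succ m ih =>
    have h2 := shift_mem_X ih
    have h3 : (fun i => x (i + (m+1))) = (fun i => (fun j => x (j + m)) (i + 1)) := by
      funext i
      show x (i + (m+1)) = x (i + 1 + m)
      congr 1
      omega
    rw [h3]
    exact h2

lemma drop_pref (x : ℕ → ℕ) (m n : ℕ) (h : m ≤ n) :
    (pref x n).drop m = pref (fun i => x (i + m)) (n - m) := by
  obtain ⟨j, rfl⟩ := Nat.exists_eq_add_of_le h
  rw [pref_append]
  rw [show pref x m ++ pref (fun i => x (m+i)) j = pref x m ++ pref (fun i => x (m+i)) j from rfl]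
  have hd : (pref x m ++ pref (fun i => x (m + i)) j).drop m = pref (fun i => x (m + i)) j := by
    have := List.drop_left (l₁ := pref x m) (l₂ := pref (fun i => x (m + i)) j)
    rwa [pref_length] at this
  rw [hd]
  have : m + j - m = j := by omega
  rw [this]
  apply pref_congr
  intro i _
  simp [add_comm]

lemma isSubperiodic_T (s : ℝ) : IsSubperiodic (TT s) := by
  refine ⟨0, fun w hw => ⟨fun v => v.drop w.length, ?_, ?_, ?_, ?_, ?_⟩⟩
  · simpa [List.drop_length] using nil_mem_T s
  · simp [List.drop_length]
  · rintro u ⟨_, ⟨u', rfl⟩⟩ v ⟨_, ⟨v', rfl⟩⟩ h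
    simpa [List.drop_left] using h
  · rintro v ⟨hvT, ⟨v', rfl⟩⟩
    obtain ⟨x, hx, hv⟩ := mem_T_form hvT
    simp only [List.drop_length]
    constructor
    · show (w ++ v').drop w.length ∈ TT s
      have hlen : w.length ≤ (w ++ v').length := by simp
      rw [hv, drop_pref x _ _ (by rw [← pref_length x (w ++ v').length, ← hv]; exact hlen)]
      exact pref_mem_T (shift_iter_mem_X _ hx) _
    · exact List.nil_prefix
  · rintro u ⟨_, ⟨u', rfl⟩⟩ v ⟨_, ⟨v', rfl⟩⟩ h
    rcases h with ⟨b, hb⟩ | ⟨b, hb⟩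
    · left
      refine ⟨b, ?_⟩
      show List.drop w.length (w ++ v') = List.drop w.length (w ++ u') ++ [b]
      rw [hb, List.append_assoc, List.drop_left, List.drop_left]
    · right
      refine ⟨b, ?_⟩
      show List.drop w.length (w ++ u') = List.drop w.length (w ++ v') ++ [b]
      rw [hb, List.append_assoc, List.drop_left, List.drop_left]

end IGRwit

namespace IGRwit
open TreeNotions

variable {s : ℝ}

lemma g_real_lb (s : ℝ) (k : ℕ) : ((k:ℝ)+1)^s ≤ (g s k : ℝ) := Nat.le_ceil _

lemma g_real_ub (s : ℝ) (k : ℕ) : (g s k : ℝ) ≤ ((k:ℝ)+1)^s + 1 :=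
  (Nat.ceil_lt_add_one (by positivity)).le

lemma D_zero_lower (hs : 0 < s) (i : ℕ) : ((i:ℝ)/2)^(s+1) ≤ (D s 0 i : ℝ) := by
  rcases Nat.eq_zero_or_pos i with rfl | hi
  · simp [Real.zero_rpow (by positivity : s + 1 ≠ 0), D]
  have hsub : Finset.Ico (i/2) i ⊆ Finset.range i := by
    intro j hj
    simp only [Finset.mem_Ico] at hj
    simp only [Finset.mem_range]
    omega
  have h1 : ∑ j ∈ Finset.Ico (i/2) i, (g s j : ℝ) ≤ (D s 0 i : ℝ) := by
    have hD : (D s 0 i : ℝ) = ∑ j ∈ Finset.range i, (g s j : ℝ) := by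
      unfold D; push_cast; simp
    rw [hD]
    exact Finset.sum_le_sum_of_subset_of_nonneg hsub (fun j _ _ => by positivity)
  have h2 : ∀ j ∈ Finset.Ico (i/2) i, ((i:ℝ)/2)^s ≤ (g s j : ℝ) := by
    intro j hj
    simp only [Finset.mem_Ico] at hj
    refine le_trans ?_ (g_real_lb s j)
    apply Real.rpow_le_rpow (by positivity) ?_ hs.le
    have : i ≤ 2 * j + 2 := by omega
    have : (i:ℝ) ≤ 2*(j:ℝ)+2 := by exact_mod_cast this
    linarith
  have h3 := Finset.card_nsmul_le_sum (Finset.Ico (i/2) i) (fun j => (g s j:ℝ)) (((i:ℝ)/2)^s) h2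
  rw [Nat.card_Ico, nsmul_eq_mul] at h3
  have h4 : ((i:ℝ)/2) ≤ ((i - i/2 : ℕ) : ℝ) := by
    have h5 : ((i/2 : ℕ) : ℝ) ≤ (i:ℝ)/2 := Nat.cast_div_le
    have h6 : ((i - i/2 : ℕ) : ℝ) = (i:ℝ) - ((i/2:ℕ):ℝ) := by
      have : i/2 ≤ i := by omega
      push_cast [this]; ring
    rw [h6]; linarith
  have h7 : ((i:ℝ)/2)^(s+1) = ((i:ℝ)/2)^s * ((i:ℝ)/2) := by
    rw [Real.rpow_add_one (by positivity : (i:ℝ)/2 ≠ 0)]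
  rw [h7]
  have h8 : ((i:ℝ)/2)^s * ((i:ℝ)/2) ≤ ((i - i/2 : ℕ) : ℝ) * ((i:ℝ)/2)^s := by
    rw [mul_comm]
    apply mul_le_mul_of_nonneg_right h4 (by positivity)
  linarith

noncomputable def Mf (s : ℝ) (n : ℕ) : ℕ := ⌈2*(n:ℝ)^((s+1)⁻¹)⌉₊

noncomputable def kkf (s : ℝ) (n : ℕ) : ℕ := ⌊((n:ℝ)/(2^s+2))^((s+1)⁻¹)⌋₊

lemma index_lt_M (hs : 0 < s) {k i n : ℕ} (h : D s k i < n) : i < Mf s n := by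
  have h0 : D s 0 i ≤ D s k i := D_mono_k hs.le (Nat.zero_le k) i
  have h1 : ((i:ℝ)/2)^(s+1) < (n:ℝ) := by
    calc ((i:ℝ)/2)^(s+1) ≤ (D s 0 i : ℝ) := D_zero_lower hs i
    _ < (n:ℝ) := by exact_mod_cast lt_of_le_of_lt h0 h
  have hinv : 0 < (s+1)⁻¹ := by positivity
  have h2 : (i:ℝ)/2 < (n:ℝ)^((s+1)⁻¹) := by
    have := Real.rpow_lt_rpow (by positivity) h1 hinv
    rwa [← Real.rpow_mul (by positivity), mul_inv_cancel₀ (by positivity : s+1 ≠ 0),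
      Real.rpow_one] at this
  exact Nat.lt_ceil.2 (by linarith)

end IGRwit

namespace IGRwit
open TreeNotions

variable {s : ℝ}

lemma kk_pos_n (hs : 0 < s) {n : ℕ} (hn : 1 ≤ kkf s n) : 1 ≤ n := by
  by_contra h
  have : n = 0 := by omega
  subst this
  have : kkf s 0 = 0 := by
    unfold kkf
    rw [Nat.cast_zero, zero_div, Real.zero_rpow (ne_of_gt (by positivity : (0:ℝ) < (s+1)⁻¹)), Nat.floor_zero]
  omega

lemma D_kk_lt (hs : 0 < s) {n : ℕ} (hn : 1 ≤ kkf s n) : D s (kkf s n) (kkf s n) < n := by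
  set k := kkf s n with hk
  have hn1 : 1 ≤ n := kk_pos_n hs hn
  have hA : (0:ℝ) < 2^s := by positivity
  -- upper bound on D k k
  have hub : (D s k k : ℝ) ≤ (2^s + 1) * (k:ℝ)^(s+1) := by
    have h1 : (D s k k : ℝ) = ∑ j ∈ Finset.range k, (g s (k+j) : ℝ) := by
      unfold D; push_cast; simp
    have h2 : ∀ j ∈ Finset.range k, (g s (k+j) : ℝ) ≤ 2^s * (k:ℝ)^s + 1 := by
      intro j hj
      simp only [Finset.mem_range] at hj
      refine le_trans (g_real_ub s (k+j)) ?_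
      have h3 : ((k+j:ℕ):ℝ) + 1 ≤ 2*(k:ℝ) := by
        have : (k + j : ℕ) + 1 ≤ 2 * k := by omega
        exact_mod_cast this
      have h4 : (((k+j:ℕ):ℝ)+1)^s ≤ (2*(k:ℝ))^s :=
        Real.rpow_le_rpow (by positivity) h3 hs.le
      have h5 : (2*(k:ℝ))^s = 2^s * (k:ℝ)^s :=
        Real.mul_rpow (by norm_num) (by positivity)
      linarith
    have h6 : (D s k k : ℝ) ≤ k * (2^s * (k:ℝ)^s + 1) := by
      rw [h1]
      calc ∑ j ∈ Finset.range k, (g s (k+j) : ℝ) ≤ ∑ _j ∈ Finset.range k, (2^s * (k:ℝ)^s + 1) :=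
        Finset.sum_le_sum h2
      _ = k * (2^s * (k:ℝ)^s + 1) := by rw [Finset.sum_const, Finset.card_range, nsmul_eq_mul]
    have hk1 : (1:ℝ) ≤ (k:ℝ) := by exact_mod_cast hn
    have h7 : (k:ℝ) * (k:ℝ)^s = (k:ℝ)^(s+1) := by
      rw [Real.rpow_add_one (by positivity : (k:ℝ) ≠ 0)]
      ring
    have h8 : (k:ℝ) ≤ (k:ℝ)^(s+1) := by
      nth_rewrite 1 [← Real.rpow_one (k:ℝ)]
      exact Real.rpow_le_rpow_of_exponent_le hk1 (by linarith)
    calc (D s k k : ℝ) ≤ k * (2^s * (k:ℝ)^s + 1) := h6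
    _ = 2^s * ((k:ℝ) * (k:ℝ)^s) + k := by ring
    _ = 2^s * (k:ℝ)^(s+1) + k := by rw [h7]
    _ ≤ 2^s * (k:ℝ)^(s+1) + (k:ℝ)^(s+1) := by linarith
    _ = (2^s + 1) * (k:ℝ)^(s+1) := by ring
  -- bound on k
  have hkle : (k:ℝ) ≤ ((n:ℝ)/(2^s+2))^((s+1)⁻¹) := Nat.floor_le (by positivity)
  have hkpow : (k:ℝ)^(s+1) ≤ (n:ℝ)/(2^s+2) := by
    calc (k:ℝ)^(s+1) ≤ (((n:ℝ)/(2^s+2))^((s+1)⁻¹))^(s+1) :=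
      Real.rpow_le_rpow (by positivity) hkle (by positivity)
    _ = (n:ℝ)/(2^s+2) := by
      rw [← Real.rpow_mul (by positivity), inv_mul_cancel₀ (by positivity : s+1 ≠ 0),
        Real.rpow_one]
  have hfin : (D s k k : ℝ) < (n:ℝ) := by
    have hn1' : (1:ℝ) ≤ (n:ℝ) := by exact_mod_cast hn1
    calc (D s k k : ℝ) ≤ (2^s + 1) * (k:ℝ)^(s+1) := hub
    _ ≤ (2^s + 1) * ((n:ℝ)/(2^s+2)) := by
      apply mul_le_mul_of_nonneg_left hkpow (by positivity)
    _ < (n:ℝ) := by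
      rw [mul_div_assoc']
      rw [div_lt_iff₀ (by positivity)]
      nlinarith
  exact_mod_cast hfin

-- encoding for upper bound
def eo (n : ℕ) (o : Option (Fin n × Fin 2)) (m : ℕ) : ℕ :=
  match o with
  | none => 0
  | some (q, l) => if q.1 = m then l.1 + 1 else 0

noncomputable def FF (s : ℝ) (n : ℕ) (φ : Fin (Mf s n) → Option (Fin n × Fin 2)) : List ℕ :=
  pref (fun m => ∑ j : Fin (Mf s n), eo n (φ j) m) n

lemma level_subset_range (hs : 0 < s) (n : ℕ) :
    level (TT s) n ⊆ Set.range (FF s n) := by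
  rintro w ⟨hwT, hwl⟩
  obtain ⟨x, hx, hw⟩ := mem_T_form hwT
  rw [hwl] at hw
  obtain ⟨k, p, c, hOK, rfl⟩ := hx
  refine ⟨fun j => if h : p + D s k j.1 < n ∧ c j.1 ≠ 0 then
      some (⟨p + D s k j.1, h.1⟩, ⟨c j.1 - 1, by have := hOK.1 j.1; omega⟩) else none, ?_⟩
  rw [hw]
  unfold FF
  apply pref_congr
  intro m hm
  by_cases hex : ∃ i, p + D s k i = m ∧ c i ≠ 0
  · obtain ⟨i, him, hci⟩ := hex
    have hiM : i < Mf s n := by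
      apply index_lt_M hs (k := k)
      omega
    rw [seq_marker c him]
    rw [Finset.sum_eq_single (⟨i, hiM⟩ : Fin (Mf s n))]
    · have hcond : p + D s k i < n ∧ c i ≠ 0 := ⟨by omega, hci⟩
      show eo n (if h : p + D s k i < n ∧ c i ≠ 0 then
        some (⟨p + D s k i, h.1⟩, ⟨c i - 1, by have := hOK.1 i; omega⟩) else none) m = c i
      rw [dif_pos hcond]
      simp only [eo, him, if_pos]
      have := hOK.1 i
      omega
    · intro j _ hji
      show eo n (if h : p + D s k j.1 < n ∧ c j.1 ≠ 0 then
        some (⟨p + D s k j.1, h.1⟩, ⟨c j.1 - 1, by have := hOK.1 j.1; omega⟩) else none) m = 0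
      by_cases hj : p + D s k j.1 < n ∧ c j.1 ≠ 0
      · rw [dif_pos hj]
        simp only [eo]
        rw [if_neg]
        intro hEq
        apply hji
        apply Fin.ext
        have : (j.1:ℕ) = i := (D_strictMono s k).injective (by omega)
        simp [this]
      · rw [dif_neg hj]; rfl
    · intro h; exact absurd (Finset.mem_univ _) h
  · push_neg at hex
    rw [seq_zero c (fun i hi => by
      by_contra hci
      exact hci (hex i hi))]
    apply Finset.sum_eq_zero
    intro j _
    show eo n (if h : p + D s k j.1 < n ∧ c j.1 ≠ 0 then
      some (⟨p + D s k j.1, h.1⟩, ⟨c j.1 - 1, by have := hOK.1 j.1; omega⟩) else none) m = 0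
    by_cases hj : p + D s k j.1 < n ∧ c j.1 ≠ 0
    · rw [dif_pos hj]
      simp only [eo]
      rw [if_neg]
      intro hEq
      exact hj.2 (hex j.1 hEq)
    · rw [dif_neg hj]; rfl

lemma level_finite (hs : 0 < s) (n : ℕ) : (level (TT s) n).Finite :=
  Set.Finite.subset (Set.finite_range (FF s n)) (level_subset_range hs n)

lemma card_level_le (hs : 0 < s) (n : ℕ) :
    Nat.card (level (TT s) n) ≤ (2*n+1) ^ (Mf s n) := by
  have h1 : Nat.card (level (TT s) n) ≤ Nat.card (Set.range (FF s n)) :=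
    Nat.card_mono (Set.finite_range (FF s n)) (level_subset_range hs n)
  have h2 : Nat.card (Set.range (FF s n)) ≤
      Nat.card (Fin (Mf s n) → Option (Fin n × Fin 2)) :=
    Nat.card_le_card_of_surjective _ Set.rangeFactorization_surjective
  have h3 : Nat.card (Fin (Mf s n) → Option (Fin n × Fin 2)) = (2*n+1) ^ (Mf s n) := by
    rw [Nat.card_fun]
    simp [Nat.card_eq_fintype_card]
    ring_nf
  omega

end IGRwit

namespace IGRwit
open TreeNotions

variable {s : ℝ}

def cL (kk : ℕ) (f : Fin (kk+1) → Fin 2) : ℕ → ℕ :=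
  fun i => if h : i < kk+1 then (f ⟨i, h⟩).1 + 1 else 0

lemma cL_OK (kk : ℕ) (f : Fin (kk+1) → Fin 2) : OK kk (cL kk f) := by
  refine ⟨fun i => ?_, fun i h => ?_, fun i h => ?_⟩
  · unfold cL
    split
    · rename_i h
      have := (f ⟨i, h⟩).2
      omega
    · omega
  · unfold cL at h ⊢
    split at h
    · rename_i hi
      rw [dif_pos (by omega : i < kk+1)]
      omega
    · simp at h
  · unfold cL at h
    by_contra hik
    rw [dif_neg (by omega)] at h
    exact h rfl

lemma card_level_ge (hs : 0 < s) {n : ℕ} (hD : D s (kkf s n) (kkf s n) < n) :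
    2^(kkf s n + 1) ≤ Nat.card (level (TT s) n) := by
  set kk := kkf s n with hkk
  haveI : Finite (level (TT s) n) := (level_finite hs n).to_subtype
  have hmem : ∀ f : Fin (kk+1) → Fin 2,
      pref (seq s kk 0 (cL kk f)) n ∈ level (TT s) n := by
    intro f
    exact ⟨pref_mem_T ⟨kk, 0, cL kk f, cL_OK kk f, rfl⟩ n, pref_length _ n⟩
  have hinj : Function.Injective
      (fun f : Fin (kk+1) → Fin 2 =>
        (⟨pref (seq s kk 0 (cL kk f)) n, hmem f⟩ : level (TT s) n)) := by
    intro f1 f2 h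
    simp only [Subtype.mk.injEq] at h
    funext i
    have hDi : D s kk i.1 < n :=
      lt_of_le_of_lt ((D_strictMono s kk).monotone (by omega : i.1 ≤ kk)) hD
    have h1 := pref_eq_imp h (D s kk i.1) hDi
    rw [seq_marker (cL kk f1) (by omega : 0 + D s kk i.1 = D s kk i.1),
      seq_marker (cL kk f2) (by omega : 0 + D s kk i.1 = D s kk i.1)] at h1
    unfold cL at h1
    rw [dif_pos i.2, dif_pos i.2] at h1
    apply Fin.ext
    have : (⟨i.1, i.2⟩ : Fin (kk+1)) = i := by apply Fin.ext; rfl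
    rw [this] at h1
    omega
  have := Nat.card_le_card_of_injective _ hinj
  calc 2^(kk+1) = Nat.card (Fin (kk+1) → Fin 2) := by
        rw [Nat.card_fun]; simp [Nat.card_eq_fintype_card]
  _ ≤ _ := this

end IGRwit

namespace IGRwit
open TreeNotions Filter Real

variable {s : ℝ}

lemma tsum_level_const (hs : 0 < s) (n : ℕ) (C : ℝ≥0∞) :
    ∑' (_ : level (TT s) n), C = (Nat.card (level (TT s) n) : ℝ≥0∞) * C := by
  haveI := (level_finite hs n).fintype
  rw [tsum_fintype, Finset.sum_const, Finset.card_univ, nsmul_eq_mul,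
    Nat.card_eq_fintype_card]

lemma ev_kk_ge_one (hs : 0 < s) : ∀ᶠ n : ℕ in atTop, 1 ≤ kkf s n := by
  have h2 : Tendsto (fun n : ℕ => (n:ℝ)) atTop atTop := tendsto_natCast_atTop_atTop
  filter_upwards [h2.eventually_ge_atTop (2^s+2)] with n hn
  unfold kkf
  rw [Nat.le_floor_iff (by positivity)]
  have h3 : (1:ℝ) ≤ (n:ℝ)/(2^s+2) := by
    rw [le_div_iff₀ (by positivity)]
    linarith
  calc ((1:ℕ):ℝ) = 1^((s+1)⁻¹) := by rw [Real.one_rpow]; norm_num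
  _ ≤ ((n:ℝ)/(2^s+2))^((s+1)⁻¹) := Real.rpow_le_rpow (by norm_num) h3 (by positivity)

lemma ev_card_lower (hs : 0 < s) {lam : ℝ} (hl : 0 < lam) (hla : lam < (s+1)⁻¹) :
    ∀ᶠ n : ℕ in atTop,
      Real.exp ((n:ℝ)^lam) ≤ (Nat.card (level (TT s) n) : ℝ) := by
  have hc2pos : (0:ℝ) < 2^s+2 := by positivity
  have hmain : Tendsto (fun n : ℕ => (n:ℝ)^((s+1)⁻¹-lam)) atTop atTop :=
    (tendsto_rpow_atTop (by linarith)).comp tendsto_natCast_atTop_atTop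
  have hlog2 : (0:ℝ) < Real.log 2 := Real.log_pos (by norm_num)
  filter_upwards [hmain.eventually_ge_atTop ((2^s+2)^((s+1)⁻¹) / Real.log 2),
    ev_kk_ge_one hs, Filter.eventually_ge_atTop 1] with n hn hkk hn1
  have hD := D_kk_lt hs hkk
  have hcard := card_level_ge hs hD
  have hn1' : (1:ℝ) ≤ (n:ℝ) := by exact_mod_cast hn1
  have hfl : ((n:ℝ)/(2^s+2))^((s+1)⁻¹) < (kkf s n : ℝ) + 1 := Nat.lt_floor_add_one _
  have hy : (n:ℝ)^lam ≤ Real.log 2 * ((n:ℝ)/(2^s+2))^((s+1)⁻¹) := by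
    rw [Real.div_rpow (by positivity) hc2pos.le ((s+1)⁻¹)]
    rw [div_le_iff₀ hlog2] at hn
    have hrs : (n:ℝ)^((s+1)⁻¹-lam) = (n:ℝ)^((s+1)⁻¹) / (n:ℝ)^lam := by
      rw [Real.rpow_sub (by linarith)]
    rw [hrs, div_mul_eq_mul_div, le_div_iff₀ (by positivity : (0:ℝ) < (n:ℝ)^lam)] at hn
    have hca : (0:ℝ) < ((2:ℝ)^s+2)^((s+1)⁻¹) := by positivity
    rw [mul_div_assoc', le_div_iff₀ hca]
    nlinarith [hn]
  have h2pow : ((2:ℝ))^(kkf s n + 1) = Real.exp (Real.log 2 * ((kkf s n : ℝ)+1)) := by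
    rw [← Real.rpow_natCast 2 (kkf s n + 1), Real.rpow_def_of_pos (by norm_num)]
    push_cast
    ring_nf
  have hstep : Real.exp ((n:ℝ)^lam) ≤ ((2:ℝ))^(kkf s n + 1) := by
    rw [h2pow]
    apply Real.exp_le_exp.2
    calc (n:ℝ)^lam ≤ Real.log 2 * ((n:ℝ)/(2^s+2))^((s+1)⁻¹) := hy
    _ ≤ Real.log 2 * ((kkf s n : ℝ)+1) := mul_le_mul_of_nonneg_left hfl.le hlog2.le
  refine le_trans hstep ?_
  have h2n : ((2:ℝ))^(kkf s n + 1) = ((2^(kkf s n + 1) : ℕ) : ℝ) := by push_cast; ring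
  rw [h2n]
  exact_mod_cast hcard

lemma ev_card_upper (hs : 0 < s) {lam : ℝ} (hla : (s+1)⁻¹ < lam) :
    Tendsto (fun n : ℕ => (Nat.card (level (TT s) n) : ℝ) * Real.exp (-(n:ℝ)^lam))
      atTop (nhds 0) := by
  have ha0 : 0 < (s+1)⁻¹ := by positivity
  set δ := (lam - (s+1)⁻¹)/2 with hδ
  have hδ0 : 0 < δ := by rw [hδ]; linarith
  have hev : ∀ᶠ n : ℕ in atTop,
      (Nat.card (level (TT s) n) : ℝ) * Real.exp (-(n:ℝ)^lam) ≤ Real.exp (-((n:ℝ)^lam/2)) := by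
    have hmain : Tendsto (fun n : ℕ => (n:ℝ)^(lam-(s+1)⁻¹-δ)) atTop atTop :=
      (tendsto_rpow_atTop (by rw [hδ]; linarith)).comp tendsto_natCast_atTop_atTop
    filter_upwards [hmain.eventually_ge_atTop (2*(2*(3:ℝ)^δ/δ + 3^δ/δ)),
      Filter.eventually_ge_atTop 1] with n hn hn1
    have hn1' : (1:ℝ) ≤ (n:ℝ) := by exact_mod_cast hn1
    have h1 : (Nat.card (level (TT s) n) : ℝ) ≤ ((2*n+1:ℕ):ℝ)^((Mf s n : ℕ)) := by
      exact_mod_cast card_level_le hs n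
    have hlog : Real.log ((2*n+1:ℕ):ℝ) ≤ 3^δ * (n:ℝ)^δ/δ := by
      calc Real.log ((2*n+1:ℕ):ℝ) ≤ Real.log (3*(n:ℝ)) := by
            apply Real.log_le_log (by positivity)
            push_cast; linarith
      _ ≤ (3*(n:ℝ))^δ/δ := Real.log_le_rpow_div (by positivity) hδ0
      _ = 3^δ * (n:ℝ)^δ/δ := by rw [Real.mul_rpow (by norm_num) (by positivity)]
    have hM : (Mf s n : ℝ) ≤ 2*(n:ℝ)^((s+1)⁻¹) + 1 := by
      have h0 : ((Mf s n : ℕ) : ℝ) < 2*(n:ℝ)^((s+1)⁻¹) + 1 :=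
        Nat.ceil_lt_add_one (by positivity)
      linarith
    have hexps : (n:ℝ)^((s+1)⁻¹) * (n:ℝ)^δ = (n:ℝ)^((s+1)⁻¹+δ) :=
      (Real.rpow_add (by linarith) _ _).symm
    have hδa : (n:ℝ)^δ ≤ (n:ℝ)^((s+1)⁻¹+δ) :=
      Real.rpow_le_rpow_of_exponent_le hn1' (by linarith)
    have hlogpos : (0:ℝ) ≤ Real.log ((2*n+1:ℕ):ℝ) := by
      apply Real.log_nonneg
      push_cast; linarith
    have hkey : Real.log ((2*n+1:ℕ):ℝ) * (Mf s n : ℝ) ≤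
        (2*(3:ℝ)^δ/δ + 3^δ/δ) * (n:ℝ)^((s+1)⁻¹+δ) := by
      calc Real.log ((2*n+1:ℕ):ℝ) * (Mf s n : ℝ)
          ≤ (3^δ * (n:ℝ)^δ/δ) * (2*(n:ℝ)^((s+1)⁻¹) + 1) := by
            apply mul_le_mul hlog hM (by positivity) (by positivity)
      _ = (2*(3:ℝ)^δ/δ) * ((n:ℝ)^((s+1)⁻¹) * (n:ℝ)^δ) + (3^δ/δ) * (n:ℝ)^δ := by ring
      _ ≤ (2*(3:ℝ)^δ/δ) * (n:ℝ)^((s+1)⁻¹+δ) + (3^δ/δ) * (n:ℝ)^((s+1)⁻¹+δ) := by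
            rw [hexps]
            have h5 : (3^δ/δ) * (n:ℝ)^δ ≤ (3^δ/δ) * (n:ℝ)^((s+1)⁻¹+δ) :=
              mul_le_mul_of_nonneg_left hδa (by positivity)
            linarith
      _ = (2*(3:ℝ)^δ/δ + 3^δ/δ) * (n:ℝ)^((s+1)⁻¹+δ) := by ring
    have hhalf : (2*(3:ℝ)^δ/δ + 3^δ/δ) * (n:ℝ)^((s+1)⁻¹+δ) ≤ (n:ℝ)^lam/2 := by
      have hpow : (0:ℝ) < (n:ℝ)^((s+1)⁻¹+δ) := by positivity
      have h6 := mul_le_mul_of_nonneg_right hn hpow.le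
      rw [← Real.rpow_add (by linarith : (0:ℝ) < (n:ℝ))] at h6
      have h7 : lam-(s+1)⁻¹-δ + ((s+1)⁻¹+δ) = lam := by ring
      rw [h7] at h6
      linarith
    have hcard2 : (Nat.card (level (TT s) n) : ℝ) ≤ Real.exp ((n:ℝ)^lam/2) := by
      calc (Nat.card (level (TT s) n) : ℝ) ≤ ((2*n+1:ℕ):ℝ)^((Mf s n : ℕ)) := h1
      _ = Real.exp (Real.log ((2*n+1:ℕ):ℝ) * (Mf s n : ℝ)) := by
        rw [← Real.rpow_natCast ((2*n+1:ℕ):ℝ) (Mf s n),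
          Real.rpow_def_of_pos (by positivity)]
      _ ≤ Real.exp ((n:ℝ)^lam/2) := Real.exp_le_exp.2 (le_trans hkey hhalf)
    have hepos : (0:ℝ) < Real.exp (-(n:ℝ)^lam) := Real.exp_pos _
    calc (Nat.card (level (TT s) n) : ℝ) * Real.exp (-(n:ℝ)^lam)
        ≤ Real.exp ((n:ℝ)^lam/2) * Real.exp (-(n:ℝ)^lam) :=
          mul_le_mul_of_nonneg_right hcard2 hepos.le
    _ = Real.exp ((n:ℝ)^lam/2 + -(n:ℝ)^lam) := by rw [← Real.exp_add]
    _ = Real.exp (-((n:ℝ)^lam/2)) := by ring_nf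
  have hlow : ∀ᶠ n : ℕ in atTop,
      (0:ℝ) ≤ (Nat.card (level (TT s) n) : ℝ) * Real.exp (-(n:ℝ)^lam) := by
    filter_upwards with n
    positivity
  have hl : 0 < lam := lt_trans ha0 hla
  have hup : Tendsto (fun n : ℕ => Real.exp (-((n:ℝ)^lam/2))) atTop (nhds 0) := by
    apply Real.tendsto_exp_atBot.comp
    have h1 : Tendsto (fun n : ℕ => (n:ℝ)^lam) atTop atTop :=
      (tendsto_rpow_atTop hl).comp tendsto_natCast_atTop_atTop
    have h2 : Tendsto (fun y : ℝ => -(y/2)) atTop atBot := by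
      apply Filter.tendsto_neg_atTop_atBot.comp
      exact Tendsto.atTop_div_const (by norm_num) tendsto_id
    exact h2.comp h1
  exact squeeze_zero' hlow hev hup

end IGRwit

namespace IGRwit
open TreeNotions Filter Real

variable {s : ℝ}

lemma liminf_pos_of_lt (hs : 0 < s) {lam : ℝ} (hl : 0 < lam) (hla : lam < (s+1)⁻¹) :
    0 < Filter.liminf
      (fun n => ∑' _e : level (TT s) n, ENNReal.ofReal (Real.exp (-(n : ℝ) ^ lam))) atTop := by
  have hge : (1:ℝ≥0∞) ≤ Filter.liminf
      (fun n => ∑' _e : level (TT s) n, ENNReal.ofReal (Real.exp (-(n : ℝ) ^ lam))) atTop := by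
    refine Filter.le_liminf_of_le (by isBoundedDefault) ?_
    filter_upwards [ev_card_lower hs hl hla] with n hn
    rw [tsum_level_const hs n _]
    calc (1:ℝ≥0∞) = ENNReal.ofReal (Real.exp ((n:ℝ)^lam) * Real.exp (-(n:ℝ)^lam)) := by
          rw [← Real.exp_add]
          simp
    _ = ENNReal.ofReal (Real.exp ((n:ℝ)^lam)) * ENNReal.ofReal (Real.exp (-(n:ℝ)^lam)) :=
      ENNReal.ofReal_mul (le_of_lt (Real.exp_pos _))
    _ ≤ (Nat.card (level (TT s) n) : ℝ≥0∞) * ENNReal.ofReal (Real.exp (-(n:ℝ)^lam)) := by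
      apply mul_le_mul_left
      rw [← ENNReal.ofReal_natCast]
      exact ENNReal.ofReal_le_ofReal hn
  exact lt_of_lt_of_le zero_lt_one hge

lemma liminf_zero_of_gt (hs : 0 < s) {lam : ℝ} (hla : (s+1)⁻¹ < lam) :
    Filter.liminf
      (fun n => ∑' _e : level (TT s) n, ENNReal.ofReal (Real.exp (-(n : ℝ) ^ lam))) atTop
      = 0 := by
  have hteq : ∀ n : ℕ, (∑' _e : level (TT s) n, ENNReal.ofReal (Real.exp (-(n:ℝ)^lam)))
      = ENNReal.ofReal ((Nat.card (level (TT s) n):ℝ) * Real.exp (-(n:ℝ)^lam)) := by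
    intro n
    rw [tsum_level_const hs, ENNReal.ofReal_mul (by positivity), ENNReal.ofReal_natCast]
  have h1 := ENNReal.tendsto_ofReal (ev_card_upper hs hla)
  rw [ENNReal.ofReal_zero] at h1
  have h2 : Tendsto
      (fun n => ∑' _e : level (TT s) n, ENNReal.ofReal (Real.exp (-(n:ℝ)^lam)))
      atTop (nhds 0) := by
    apply h1.congr
    intro n
    exact (hteq n).symm
  exact h2.liminf_eq

lemma Igr_eq (hs : 0 < s) : Igr (TT s) = (s+1)⁻¹ := by
  have ha0 : (0:ℝ) < (s+1)⁻¹ := by positivity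
  have hub : ∀ lam ∈ {lam : ℝ | 0 < lam ∧
      0 < Filter.liminf
        (fun n => ∑' _e : level (TT s) n, ENNReal.ofReal (Real.exp (-(n : ℝ) ^ lam))) atTop},
      lam ≤ (s+1)⁻¹ := by
    rintro lam ⟨hl0, hpos⟩
    by_contra hgt
    push_neg at hgt
    rw [liminf_zero_of_gt hs hgt] at hpos
    exact lt_irrefl 0 hpos
  apply le_antisymm
  · exact Real.sSup_le hub ha0.le
  · by_contra h
    push_neg at h
    set S := {lam : ℝ | 0 < lam ∧
      0 < Filter.liminf
        (fun n => ∑' _e : level (TT s) n, ENNReal.ofReal (Real.exp (-(n : ℝ) ^ lam))) atTop}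
      with hS
    have hbdd : BddAbove S := ⟨(s+1)⁻¹, fun x hx => hub x hx⟩
    set m := max (sSup S) 0 with hm
    have hmlt : m < (s+1)⁻¹ := by
      rw [hm]
      apply max_lt h ha0
    set lam := (m + (s+1)⁻¹)/2 with hlam
    have hl0 : 0 < lam := by
      rw [hlam, hm]
      have := le_max_right (sSup S) 0
      have h2 : (0:ℝ) ≤ m := by rw [hm]; exact le_max_right _ _
      linarith
    have hla : lam < (s+1)⁻¹ := by rw [hlam]; linarith
    have hmem : lam ∈ S := ⟨hl0, liminf_pos_of_lt hs hl0 hla⟩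
    have hle := le_csSup hbdd hmem
    have : sSup S ≤ m := by rw [hm]; exact le_max_left _ _
    rw [hlam] at hle
    linarith

end IGRwit

namespace IGRwit
open TreeNotions Filter Real

variable {s : ℝ}

def ext0 (w : List ℕ) : ℕ → ℕ := fun m => if m < w.length then w.getD m 0 else 0

lemma ext0_mem_X {w : List ℕ} (hw : w ∈ TT s) : ext0 w ∈ X s := by
  obtain ⟨x, hx, hw'⟩ := mem_T_form hw
  obtain ⟨k, p, c, hOK, rfl⟩ := hx
  set n := w.length with hn
  refine ⟨k, p, fun i => if p + D s k i < n then c i else 0, ?_, ?_⟩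
  · refine ⟨fun i => ?_, fun i hi => ?_, fun i hi => ?_⟩
    · show (if p + D s k i < n then c i else 0) ≤ 2
      split
      · exact hOK.1 i
      · omega
    · have hi' : (if p + D s k (i+1) < n then c (i+1) else 0) ≠ 0 := hi
      show (if p + D s k i < n then c i else 0) ≠ 0
      split at hi'
      · rename_i hlt
        have hlt' : p + D s k i < n := by
          have := D_lt_succ s k i
          omega
        rw [if_pos hlt']
        exact hOK.2.1 i hi'
      · omega
    · have hi' : (if p + D s k i < n then c i else 0) ≠ 0 := hi
      split at hi'
      · exact hOK.2.2 i hi'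
      · omega
  · funext m
    have hval : ext0 w m = if m < n then seq s k p c m else 0 := by
      unfold ext0
      rw [← hn]
      split
      · rename_i hm
        rw [hw', pref_getD hm]
      · rfl
    rw [hval]
    by_cases hex : ∃ i, p + D s k i = m
    · obtain ⟨i, hi⟩ := hex
      rw [seq_marker (fun i => if p + D s k i < n then c i else 0) hi]
      by_cases hm : m < n
      · rw [if_pos hm, seq_marker c hi, if_pos (by omega)]
      · rw [if_neg hm, if_neg (by omega)]
    · push_neg at hex
      have h2 : seq s k p (fun i => if p + D s k i < n then c i else 0) m = 0 :=
        seq_zero _ (fun i hi => absurd hi (hex i))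
      rw [h2]
      split
      · exact seq_zero c (fun i hi => absurd hi (hex i))
      · rfl

lemma ray_repr {r : ℕ → List ℕ} (hr : IsRay (TT s) r) :
    ∃ x : ℕ → ℕ, (∀ n, r n = pref x n) := by
  have hlen : ∀ n, (r n).length = n := by
    intro n
    induction n with
    | zero => rw [hr.1]; rfl
    | succ n ih =>
      obtain ⟨a, ha⟩ := (hr.2 n).2
      rw [ha]
      simp [ih]
  refine ⟨fun m => (r (m+1)).getD m 0, ?_⟩
  intro n
  induction n with
  | zero => rw [hr.1]; rfl
  | succ n ih =>
    obtain ⟨a, ha⟩ := (hr.2 n).2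
    have h1 : (r (n+1)).getD n 0 = a := by
      rw [ha]
      have h2 : (r n ++ [a]).getD (r n).length 0 = a := by
        rw [List.getD_eq_getElem _ _ (by simp)]
        simp
      rwa [hlen n] at h2
    rw [pref_succ, ← ih]
    show r (n+1) = r n ++ [(r (n+1)).getD n 0]
    rw [h1, ha]

lemma c_downward {k : ℕ} {c : ℕ → ℕ} (hOK : OK k c) :
    ∀ j i, i ≤ j → c j ≠ 0 → c i ≠ 0 := by
  intro j
  induction j with
  | zero => intro i hi; rw [Nat.le_zero.1 hi]; exact id
  | succ j ih =>
    intro i hi hcj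
    rcases Nat.lt_or_ge i (j+1) with h | h
    · exact ih i (by omega) (hOK.2.1 j hcj)
    · have : i = j+1 := by omega
      rw [this]; exact hcj

lemma fiber_bound (hs : 0 < s) (G : ℕ) : ∃ K, ∀ k, g s k = G → k ≤ K := by
  refine ⟨⌈(G:ℝ)^(s⁻¹)⌉₊, fun k hk => ?_⟩
  have h1 : ((k:ℝ)+1)^s ≤ (G:ℝ) := by
    rw [← hk]
    exact g_real_lb s k
  have h2 : ((k:ℝ)+1) ≤ (G:ℝ)^(s⁻¹) := by
    calc ((k:ℝ)+1) = (((k:ℝ)+1)^s)^(s⁻¹) := by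
          rw [← Real.rpow_mul (by positivity), mul_inv_cancel₀ (ne_of_gt hs), Real.rpow_one]
    _ ≤ (G:ℝ)^(s⁻¹) := Real.rpow_le_rpow (by positivity) h1 (by positivity)
  have h3 : ((k:ℝ)+1) ≤ (⌈(G:ℝ)^(s⁻¹)⌉₊ : ℝ) := le_trans h2 (Nat.le_ceil _)
  have : (k:ℝ) < (⌈(G:ℝ)^(s⁻¹)⌉₊ : ℝ) + 1 := by linarith
  exact_mod_cast by exact_mod_cast Nat.lt_succ_iff.1 (by exact_mod_cast this)

lemma support_finite (hs : 0 < s) {x : ℕ → ℕ} (hx : ∀ n, pref x n ∈ TT s) :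
    ∃ N, ∀ m, N ≤ m → x m = 0 := by
  by_contra hcon
  push_neg at hcon
  -- support is unbounded
  choose f hf1 hf2 using hcon
  -- least and second least support points
  have hne0 : ∃ m, x m ≠ 0 := ⟨f 0, hf2 0⟩
  set q1 := Nat.find hne0 with hq1
  have hq1ne : x q1 ≠ 0 := Nat.find_spec hne0
  have hq1min : ∀ m < q1, x m = 0 := by
    intro m hm
    by_contra h
    exact Nat.find_min hne0 hm h
  have hne1 : ∃ m, q1 < m ∧ x m ≠ 0 := ⟨f (q1+1), by have := hf1 (q1+1); omega, hf2 (q1+1)⟩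
  set q2 := Nat.find hne1 with hq2
  obtain ⟨hq2gt, hq2ne⟩ : q1 < q2 ∧ x q2 ≠ 0 := Nat.find_spec hne1
  have hq2min : ∀ m, q1 < m → m < q2 → x m = 0 := by
    intro m h1 h2
    by_contra h
    exact Nat.find_min hne1 h2 ⟨h1, h⟩
  obtain ⟨K, hK⟩ := fiber_bound hs (q2 - q1)
  -- increasing sequence of support points
  set u : ℕ → ℕ := fun i => Nat.rec (f 0) (fun _ prev => f (prev + 1)) i with hu
  have hu0 : u 0 = f 0 := rfl
  have husucc : ∀ i, u (i+1) = f (u i + 1) := fun i => rfl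
  have huincr : ∀ i, u i < u (i+1) := by
    intro i
    rw [husucc]
    have := hf1 (u i + 1)
    omega
  have humono : ∀ i j, i < j → u i < u j := by
    intro i j hij
    induction j with
    | zero => omega
    | succ j ih =>
      rcases Nat.lt_or_ge i j with h | h
      · exact lt_trans (ih h) (huincr j)
      · have : i = j := by omega
        rw [this]; exact huincr j
  have husup : ∀ i, x (u i) ≠ 0 := by
    intro i
    cases i with
    | zero => exact hf2 0
    | succ i => rw [husucc]; exact hf2 _
  -- the window
  set n := u (K+1) + 1 with hn
  obtain ⟨y, hy, hyw⟩ := mem_T_form (hx n)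
  rw [pref_length] at hyw
  obtain ⟨k, p, c, hOK, rfl⟩ := hy
  have hagree : ∀ m < n, x m = seq s k p c m := pref_eq_imp hyw
  -- markers for all support points
  have hmark : ∀ m < n, x m ≠ 0 → ∃ j, p + D s k j = m ∧ c j ≠ 0 := by
    intro m hm hxm
    apply seq_ne_zero
    rw [← hagree m hm]
    exact hxm
  -- an increasing family of marker indices
  have hjstep : ∀ i, i ≤ K + 1 → ∃ j, i ≤ j ∧ p + D s k j = u i ∧ c j ≠ 0 := by
    intro i
    induction i with
    | zero =>
      intro _
      obtain ⟨j, hj1, hj2⟩ := hmark (u 0) (by have := humono 0 (K+1) (by omega); omega) (husup 0)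
      exact ⟨j, by omega, hj1, hj2⟩
    | succ i ih =>
      intro hi
      obtain ⟨j, hij, hj1, hj2⟩ := ih (by omega)
      have hui1 : u (i+1) < n := by
        rcases Nat.lt_or_ge (i+1) (K+1) with h | h
        · have := humono (i+1) (K+1) h; omega
        · have : i+1 = K+1 := by omega
          rw [this]; omega
      obtain ⟨j', hj'1, hj'2⟩ := hmark (u (i+1)) hui1 (husup (i+1))
      have hjj' : j < j' := by
        have h1 : D s k j < D s k j' := by
          have := huincr i
          omega
        exact (D_strictMono s k).lt_iff_lt.1 h1
      exact ⟨j', by omega, hj'1, hj'2⟩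
  -- k is large
  obtain ⟨j, hjK, hjpos, hjne⟩ := hjstep (K+1) (le_refl _)
  have hklarge : K + 1 ≤ k := le_trans hjK (hOK.2.2 j hjne)
  -- but the first two markers identify g s k = q2 - q1, so k ≤ K
  have hq1n : q1 < n := by
    have hA : q1 ≤ u 0 := by
      by_contra h
      exact husup 0 (hq1min (u 0) (by omega))
    have hB := humono 0 (K+1) (by omega)
    omega
  obtain ⟨i1, hi1, hi1ne⟩ := hmark q1 hq1n hq1ne
  have hi1z : i1 = 0 := by
    by_contra h
    have hc0 : c 0 ≠ 0 := c_downward hOK i1 0 (by omega) hi1ne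
    have hP0 : p + D s k 0 < q1 := by
      have hD0 : D s k 0 = 0 := Finset.sum_range_zero _
      have hDlt : D s k 0 < D s k i1 := D_strictMono s k (by omega)
      omega
    have : x (p + D s k 0) = 0 := hq1min _ hP0
    rw [hagree _ (by omega)] at this
    rw [seq_marker c rfl] at this
    exact hc0 this
  have hpq1 : p = q1 := by
    rw [hi1z] at hi1
    have hD0 : D s k 0 = 0 := Finset.sum_range_zero _
    omega
  have hq2n : q2 < n := by
    have hq1u : q1 ≤ u 0 := by
      by_contra h
      exact husup 0 (hq1min (u 0) (by omega))
    have hq2u : q2 ≤ u 1 := by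
      by_contra h
      push_neg at h
      have hx1 : x (u 1) ≠ 0 := husup 1
      have : u 0 < u 1 := huincr 0
      exact hx1 (hq2min (u 1) (by omega) h)
    have hle : u 1 ≤ u (K+1) := by
      rcases Nat.lt_or_ge 1 (K+1) with h' | h'
      · exact le_of_lt (humono 1 (K+1) h')
      · have h'' : (1:ℕ) = K+1 := by omega
        exact Nat.le_of_eq (congrArg u h'')
    omega
  obtain ⟨i2, hi2, hi2ne⟩ := hmark q2 hq2n hq2ne
  have hi2pos : 0 < i2 := by
    by_contra h
    have h0 : i2 = 0 := by omega
    rw [h0] at hi2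
    have hD0 : D s k 0 = 0 := Finset.sum_range_zero _
    omega
  have hi2one : i2 = 1 := by
    by_contra h
    have hc1 : c 1 ≠ 0 := c_downward hOK i2 1 (by omega) hi2ne
    have hP1lt : p + D s k 1 < q2 := by
      have := D_strictMono s k (show 1 < i2 by omega)
      omega
    have hP1gt : q1 < p + D s k 1 := by
      have hlt : D s k 0 < D s k 1 := D_strictMono s k (by omega)
      have hD0 : D s k 0 = 0 := Finset.sum_range_zero _
      omega
    have hz : x (p + D s k 1) = 0 := hq2min _ hP1gt hP1lt
    rw [hagree _ (by omega)] at hz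
    rw [seq_marker c rfl] at hz
    exact hc1 hz
  have hgk : g s k = q2 - q1 := by
    have hD1 : D s k 1 = g s k := by
      simp [D]
    rw [hi2one, hD1] at hi2
    omega
  have := hK k hgk
  omega

end IGRwit

namespace IGRwit
open TreeNotions Filter Real

variable {s : ℝ}

lemma tsum_set_le_card_mul {A : Set (List ℕ)} (hA : A.Finite) (F : List ℕ → ℝ≥0∞) (C : ℝ≥0∞)
    (h : ∀ e ∈ A, F e ≤ C) : ∑' e : A, F (e:List ℕ) ≤ (Nat.card A : ℝ≥0∞) * C := by
  haveI := hA.fintype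
  rw [tsum_fintype]
  calc ∑ e : A, F (e:List ℕ) ≤ Finset.univ.card • C := by
        apply Finset.sum_le_card_nsmul
        intro e _
        exact h e e.2
  _ = (Nat.card A : ℝ≥0∞) * C := by
    rw [Finset.card_univ, nsmul_eq_mul, Nat.card_eq_fintype_card]

lemma cutset_small (hs : 0 < s) {lam : ℝ} (hl : 0 < lam) {ε : ℝ≥0∞} (hε : 0 < ε) (hεt : ε ≠ ⊤) :
    ∃ pc, IsCutset (TT s) pc ∧
      ∑' e : pc, ENNReal.ofReal (Real.exp (-((e : List ℕ).length : ℝ) ^ lam)) ≤ ε := by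
  have hd : ∀ m : ℕ, ∃ dm : ℕ, 1 ≤ dm ∧
      (Nat.card (level (TT s) m) : ℝ≥0∞) *
        ENNReal.ofReal (Real.exp (-(dm:ℝ)^lam)) < ε * 2⁻¹^(m+1) := by
    intro m
    have hbpos : 0 < ε * (2⁻¹:ℝ≥0∞)^(m+1) := by
      apply ENNReal.mul_pos hε.ne'
      apply pow_ne_zero
      simp
    have hreal : Tendsto (fun d : ℕ => Real.exp (-(d:ℝ)^lam)) atTop (nhds 0) :=
      Real.tendsto_exp_atBot.comp
        ((Filter.tendsto_neg_atTop_atBot).comp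
          ((tendsto_rpow_atTop hl).comp tendsto_natCast_atTop_atTop))
    have h2 := ENNReal.tendsto_ofReal (α := ℕ) (f := atTop) hreal
    rw [ENNReal.ofReal_zero] at h2
    have h3 : Tendsto (fun d : ℕ => (Nat.card (level (TT s) m) : ℝ≥0∞) *
        ENNReal.ofReal (Real.exp (-(d:ℝ)^lam))) atTop (nhds 0) := by
      have h4 := ENNReal.Tendsto.const_mul (a := (Nat.card (level (TT s) m) : ℝ≥0∞)) h2
        (Or.inr (ENNReal.natCast_ne_top _))
      simpa using h4
    obtain ⟨dm, hdm⟩ := ((h3.eventually_lt_const hbpos).and (Filter.eventually_ge_atTop 1)).exists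
    exact ⟨dm, hdm.2, hdm.1⟩
  choose dfun hd1 hd2 using hd
  refine ⟨⋃ m, (fun w => pref (ext0 w) (dfun m)) '' (level (TT s) m), ⟨?_, ?_⟩, ?_⟩
  · rintro v hv
    simp only [Set.mem_iUnion] at hv
    obtain ⟨m, w, hw, rfl⟩ := hv
    constructor
    · exact pref_mem_T (ext0_mem_X hw.1) _
    · intro hnil
      have h5 := congrArg List.length hnil
      rw [pref_length] at h5
      simp only [List.length_nil] at h5
      have := hd1 m
      omega
  · intro r hr
    obtain ⟨x, hx⟩ := ray_repr hr
    have hxT : ∀ n, pref x n ∈ TT s := fun n => by rw [← hx n]; exact (hr.2 n).1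
    obtain ⟨N, hN⟩ := support_finite hs hxT
    refine ⟨dfun N, ?_⟩
    simp only [Set.mem_iUnion]
    refine ⟨N, r N, ⟨(hr.2 N).1, by rw [hx N, pref_length]⟩, ?_⟩
    rw [hx N, hx (dfun N)]
    apply pref_congr
    intro m _
    unfold ext0
    rw [pref_length]
    by_cases hmN : m < N
    · rw [if_pos hmN, pref_getD hmN]
    · rw [if_neg hmN]
      exact (hN m (by omega)).symm
  · have hsem : ∀ m : ℕ,
        ∑' e : ((fun w => pref (ext0 w) (dfun m)) '' (level (TT s) m)),
          ENNReal.ofReal (Real.exp (-((e:List ℕ).length:ℝ)^lam)) ≤ ε * 2⁻¹^(m+1) := by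
      intro m
      have hfin : ((fun w => pref (ext0 w) (dfun m)) '' (level (TT s) m)).Finite :=
        (level_finite hs m).image _
      have hall : ∀ e ∈ ((fun w => pref (ext0 w) (dfun m)) '' (level (TT s) m)),
          ENNReal.ofReal (Real.exp (-((e:List ℕ).length:ℝ)^lam)) ≤
            ENNReal.ofReal (Real.exp (-((dfun m : ℕ):ℝ)^lam)) := by
        rintro e ⟨w, _, rfl⟩
        rw [pref_length]
      have h5 := tsum_set_le_card_mul hfin
        (fun e => ENNReal.ofReal (Real.exp (-((e:List ℕ).length:ℝ)^lam))) _ hall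
      have h6 : (Nat.card ((fun w => pref (ext0 w) (dfun m)) '' (level (TT s) m)) : ℝ≥0∞) ≤
          (Nat.card (level (TT s) m) : ℝ≥0∞) := by
        exact_mod_cast Nat.card_image_le (level_finite hs m)
      calc ∑' e : ((fun w => pref (ext0 w) (dfun m)) '' (level (TT s) m)),
            ENNReal.ofReal (Real.exp (-((e:List ℕ).length:ℝ)^lam)) ≤ _ := h5
      _ ≤ (Nat.card (level (TT s) m) : ℝ≥0∞) *
            ENNReal.ofReal (Real.exp (-((dfun m : ℕ):ℝ)^lam)) :=
          mul_le_mul_left h6 _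
      _ ≤ ε * 2⁻¹^(m+1) := (hd2 m).le
    calc ∑' e : (⋃ m, (fun w => pref (ext0 w) (dfun m)) '' (level (TT s) m)),
          ENNReal.ofReal (Real.exp (-((e:List ℕ).length:ℝ)^lam))
        ≤ ∑' m : ℕ, ∑' e : ((fun w => pref (ext0 w) (dfun m)) '' (level (TT s) m)),
            ENNReal.ofReal (Real.exp (-((e:List ℕ).length:ℝ)^lam)) :=
          ENNReal.tsum_iUnion_le_tsum
            (fun l => ENNReal.ofReal (Real.exp (-((l:List ℕ).length:ℝ)^lam)))
            (fun m => (fun w => pref (ext0 w) (dfun m)) '' (level (TT s) m))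
    _ ≤ ∑' m : ℕ, ε * 2⁻¹^(m+1) := ENNReal.tsum_le_tsum hsem
    _ = ε := by
      rw [ENNReal.tsum_mul_left]
      have hgeom : ∑' m : ℕ, (2⁻¹:ℝ≥0∞)^(m+1) = 1 := by
        have hfn : (fun m : ℕ => (2⁻¹:ℝ≥0∞)^(m+1)) = fun m : ℕ => (2⁻¹:ℝ≥0∞)^m * 2⁻¹ := by
          funext m
          rw [pow_succ]
        rw [hfn, ENNReal.tsum_mul_right, ENNReal.tsum_geometric, ENNReal.one_sub_inv_two]
        simp only [inv_inv]
        exact ENNReal.mul_inv_cancel (by norm_num) (by norm_num)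
      rw [hgeom, mul_one]

lemma Ibr_zero (hs : 0 < s) : Ibr (TT s) = 0 := by
  have hempty : {lam : ℝ | 0 < lam ∧
      0 < ⨅ (pc) (_ : IsCutset (TT s) pc),
        ∑' e : pc, ENNReal.ofReal (Real.exp (-((e : List ℕ).length : ℝ) ^ lam))} = ∅ := by
    rw [Set.eq_empty_iff_forall_notMem]
    rintro lam ⟨hl, hpos⟩
    have hle : ∀ ε : ℝ≥0∞, 0 < ε → ε ≠ ⊤ →
        (⨅ (pc) (_ : IsCutset (TT s) pc),
          ∑' e : pc, ENNReal.ofReal (Real.exp (-((e : List ℕ).length : ℝ) ^ lam))) ≤ ε := by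
      intro ε h1 h2
      obtain ⟨pc, hcut, hsum⟩ := cutset_small hs hl h1 h2
      exact le_trans (iInf₂_le pc hcut) hsum
    set I := ⨅ (pc) (_ : IsCutset (TT s) pc),
      ∑' e : pc, ENNReal.ofReal (Real.exp (-((e : List ℕ).length : ℝ) ^ lam)) with hI
    have hm : 0 < min I 1 := lt_min hpos zero_lt_one
    have hmt : min I 1 ≠ ⊤ := (lt_of_le_of_lt (min_le_right _ _) ENNReal.one_lt_top).ne
    have hhalf : min I 1 / 2 < min I 1 := ENNReal.half_lt_self hm.ne' hmt
    have h3 := hle (min I 1 / 2) (ENNReal.half_pos hm.ne')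
      (lt_of_le_of_lt (le_trans ENNReal.half_le_self (min_le_right _ _)) ENNReal.one_lt_top).ne
    have h4 : I ≤ min I 1 / 2 := h3
    have h5 : min I 1 ≤ I := min_le_left _ _
    exact lt_irrefl _ (lt_of_le_of_lt (le_trans h5 h4) hhalf)
  unfold Ibr
  rw [hempty]
  exact Real.sSup_empty

end IGRwit


open TreeNotions in
/-- For every `α ∈ (0,1)` there is a subperiodic infinite locally finite tree with
intermediate branching number `0` and intermediate growth rate `α`. -/
theorem exists_subperiodic_Ibr_zero_Igr_eq (a : ℝ) (ha0 : 0 < a) (ha1 : a < 1) :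
    ∃ T : Set (List ℕ), IsTree T ∧ IsSubperiodic T ∧ Ibr T = 0 ∧ Igr T = a := by
  have hs : 0 < a⁻¹ - 1 := by
    have h1 : 1 < a⁻¹ := (one_lt_inv₀ ha0).2 ha1
    linarith
  have hsa : (a⁻¹ - 1 + 1)⁻¹ = a := by
    have h2 : a⁻¹ - 1 + 1 = a⁻¹ := by ring
    rw [h2, inv_inv]
  exact ⟨IGRwit.TT (a⁻¹ - 1), IGRwit.isTree_T _, IGRwit.isSubperiodic_T _,
    IGRwit.Ibr_zero hs, by rw [IGRwit.Igr_eq hs, hsa]⟩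
end
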